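/- arXiv:1312.6971 — 8 statements merged into one kernel-verified Lean document; each statement's English description precedes it below -/
import Mathlib

section
/- For every pair of integers m ≥ 1 and d ≥ 1 there exists a finite set Π of homogeneous polynomials of degree 1 in the variables X₁,…,X_d with integer coefficients such that the family of m-th powers {P^m : P ∈ Π} is a basis of the real vector space of homogeneous polynomials of degree m in d variables. -/
/-!
Polarization: for `n = card ι`,
`∑_{S ⊆ ι} (-1)^{n - |S|} (∑_{i ∈ S} x i)^n = n! ∏_i x i`.
Taking for `ι` the multiset of variables of a monomial `X^α` of degree `m`, this writes `m! X^α`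
as a signed sum of `m`-th powers of linear forms with natural coefficients. Hence these powers
span the finite-dimensional space of degree-`m` forms, and a maximal linearly independent
subfamily of them is a basis.
-/

open Finset Nat

namespace Finset

variable {ι R : Type*} [Fintype ι] [DecidableEq ι] [CommRing R]

theorem sum_ite_superset_neg_one_pow_card_compl (A : Finset ι) :
    ∑ S : Finset ι, (if A ⊆ S then (-1 : R) ^ #Sᶜ else 0) = if A = univ then 1 else 0 := by
  calc ∑ S : Finset ι, (if A ⊆ S then (-1 : R) ^ #Sᶜ else 0)
      = ∑ T : Finset ι, (if A ⊆ Tᶜ then (-1 : R) ^ #T else 0) :=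
        Fintype.sum_equiv (compl_involutive.toPerm _) _ _ (by simp)
    _ = ∑ T ∈ Aᶜ.powerset, (-1 : R) ^ #T := by
        rw [← sum_filter]; congr 1; ext T; simp [subset_compl_comm]
    _ = if A = univ then 1 else 0 := by
        simpa [apply_ite (Int.cast : ℤ → R)] using
          congrArg (Int.cast : ℤ → R) (sum_powerset_neg_one_pow_card (x := Aᶜ))

theorem sum_pow_card_eq_sum_ite_image_subset (S : Finset ι) (x : ι → R) :
    (∑ i ∈ S, x i) ^ Fintype.card ι =
      ∑ p : ι → ι, if univ.image p ⊆ S then ∏ j, x (p j) else 0 := by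
  rw [← Finset.card_univ, ← prod_const, prod_univ_sum, ← sum_filter]
  congr 1; ext p; simp [image_subset_iff]

theorem sum_neg_one_pow_card_compl_mul_sum_pow_card (x : ι → R) :
    ∑ S : Finset ι, (-1) ^ #Sᶜ * (∑ i ∈ S, x i) ^ Fintype.card ι =
      (Fintype.card ι)! * ∏ i, x i := by
  calc ∑ S : Finset ι, (-1) ^ #Sᶜ * (∑ i ∈ S, x i) ^ Fintype.card ι
      = ∑ p : ι → ι, (∑ S : Finset ι, if univ.image p ⊆ S then (-1 : R) ^ #Sᶜ else 0) *
          ∏ j, x (p j) := by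
        simp_rw [sum_pow_card_eq_sum_ite_image_subset, mul_sum, sum_mul]
        rw [sum_comm]
        simp [ite_mul, mul_ite]
    _ = ∑ p : ι → ι, if Function.Surjective p then ∏ j, x (p j) else 0 := by
        simp [sum_ite_superset_neg_one_pow_card_compl, ← coe_eq_univ, Set.range_eq_univ]
    _ = ∑ σ : Equiv.Perm ι, ∏ j, x (σ j) := by
        refine (Fintype.sum_of_injective (⇑) DFunLike.coe_injective _ _ (fun p hp => ?_)
          (fun σ => by simp [σ.surjective])).symm
        rw [if_neg]
        exact fun hsurj =>
          hp ⟨.ofBijective p ⟨Finite.injective_iff_surjective.2 hsurj, hsurj⟩, rfl⟩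
    _ = (Fintype.card ι)! * ∏ i, x i := by
        simp [Equiv.prod_comp, Fintype.card_perm]

end Finset

theorem Submodule.exists_finset_basis_of_span_image_eq {ι K M : Type*} [DivisionRing K]
    [AddCommGroup M] [Module K M] {V : Submodule K M} [Module.Finite K V] {v : ι → M}
    {s : Set ι} (h : span K (v '' s) = V) :
    ∃ t : Finset ι, ↑t ⊆ s ∧ ∃ b : Module.Basis t K V, ∀ i, (b i : M) = v i := by
  obtain ⟨u, hus, -, hsu, hli⟩ := exists_linearIndepOn_extension (linearIndepOn_empty K v)
    (Set.empty_subset s)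
  replace hli : LinearIndependent K fun i : u => v i := hli
  have hspan : span K (Set.range fun i : u => v i) = V := by
    rw [← Set.image_eq_range, ← h]
    exact le_antisymm (span_mono (Set.image_mono hus)) (span_le.2 hsu)
  let b : Module.Basis u K V := (Module.Basis.span hli).map (LinearEquiv.ofEq _ _ hspan)
  have : Finite u := Module.Finite.finite_basis b
  refine ⟨u.toFinite.toFinset, by simpa using hus,
    b.reindex (Equiv.subtypeEquivRight fun _ => u.toFinite.mem_toFinset).symm, fun i => ?_⟩
  simp only [b, Module.Basis.reindex_apply, Equiv.symm_symm, Module.Basis.map_apply,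
    LinearEquiv.coe_ofEq_apply]
  exact congrArg Subtype.val (Module.Basis.span_apply hli _)

namespace MvPolynomial

open Submodule

instance {σ R : Type*} [Finite σ] [CommSemiring R] (n : ℕ) :
    Module.Finite R (homogeneousSubmodule σ R n) :=
  Module.Finite.iff_fg.2 (homogeneousSubmodule_fg σ R n)

variable {σ : Type*} [Fintype σ]

section CommSemiring

variable (R : Type*) [CommSemiring R]

noncomputable def natLinearForm (c : σ → ℕ) : MvPolynomial σ R :=
  ∑ i, c i • X i

variable {R}

theorem isHomogeneous_natLinearForm (c : σ → ℕ) : (natLinearForm R c).IsHomogeneous 1 :=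
  Submodule.sum_mem (homogeneousSubmodule σ R 1) fun i _ =>
    nsmul_mem (show X i ∈ homogeneousSubmodule σ R 1 from isHomogeneous_X R i) _

theorem map_natLinearForm {S : Type*} [CommSemiring S] (f : R →+* S) (c : σ → ℕ) :
    map f (natLinearForm R c) = natLinearForm S c := by
  simp [natLinearForm]

theorem sum_X_comp_eq_natLinearForm {ι : Type*} [DecidableEq σ] (S : Finset ι) (g : ι → σ) :
    ∑ k ∈ S, (X (g k) : MvPolynomial σ R) = natLinearForm R fun i => #{k ∈ S | g k = i} := by
  rw [natLinearForm, ← sum_fiberwise S g]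
  refine sum_congr rfl fun i _ => ?_
  rw [sum_congr rfl fun k hk => by rw [(mem_filter.1 hk).2], sum_const]

end CommSemiring

variable {K : Type*} [Field K] [CharZero K]

theorem monomial_one_mem_span_pow_natLinearForm (α : σ →₀ ℕ) :
    monomial α (1 : K) ∈
      span K ((· ^ α.degree) ''
        Set.range (natLinearForm K : (σ → ℕ) → MvPolynomial σ K)) := by
  classical
  have hcard : Fintype.card (Σ i, Fin (α i)) = α.degree := by simp [Finsupp.degree_eq_sum]
  have hprod : ∏ k : Σ i, Fin (α i), (X k.1 : MvPolynomial σ K) = monomial α 1 := by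
    simp [Fintype.prod_sigma, monomial_eq, Finsupp.prod_fintype]
  have key := sum_neg_one_pow_card_compl_mul_sum_pow_card fun k : Σ i, Fin (α i) =>
    (X k.1 : MvPolynomial σ K)
  rw [hprod, hcard] at key
  have hfact : (α.degree ! : K) ≠ 0 := Nat.cast_ne_zero.2 α.degree.factorial_ne_zero
  refine (smul_mem_iff _ hfact).1 ?_
  rw [Nat.cast_smul_eq_nsmul, nsmul_eq_mul, ← key]
  refine sum_mem fun S _ => ?_
  rw [sum_X_comp_eq_natLinearForm,
    show (-1 : MvPolynomial σ K) ^ #Sᶜ = C ((-1) ^ #Sᶜ) by simp, ← smul_eq_C_mul]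
  exact smul_mem _ _ (subset_span ⟨_, ⟨_, rfl⟩, rfl⟩)

theorem span_pow_natLinearForm_eq_homogeneousSubmodule (m : ℕ) :
    span K ((· ^ m) '' Set.range (natLinearForm K : (σ → ℕ) → MvPolynomial σ K)) =
      homogeneousSubmodule σ K m := by
  refine le_antisymm (span_le.2 ?_) ?_
  · rintro _ ⟨_, ⟨c, rfl⟩, rfl⟩
    simpa using (isHomogeneous_natLinearForm c).pow m
  · rw [homogeneousSubmodule_eq_finsupp_supported, AddMonoidAlgebra.supported_eq_span_single,
      span_le]
    rintro _ ⟨α, rfl : α.degree = m, rfl⟩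
    exact monomial_one_mem_span_pow_natLinearForm α

end MvPolynomial

theorem stmt_0_general (m d : ℕ) :
    ∃ Ps : Finset (MvPolynomial (Fin d) ℝ),
      (∀ P ∈ Ps, MvPolynomial.IsHomogeneous P 1 ∧
        ∃ Q : MvPolynomial (Fin d) ℤ, P = MvPolynomial.map (Int.castRingHom ℝ) Q) ∧
      ∃ b : Module.Basis Ps ℝ (MvPolynomial.homogeneousSubmodule (Fin d) ℝ m),
        ∀ P : Ps, (b P : MvPolynomial (Fin d) ℝ) = (P : MvPolynomial (Fin d) ℝ) ^ m := by
  obtain ⟨Ps, hPs, b, hb⟩ := Submodule.exists_finset_basis_of_span_image_eq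
    (MvPolynomial.span_pow_natLinearForm_eq_homogeneousSubmodule (K := ℝ) (σ := Fin d) m)
  refine ⟨Ps, fun P hP => ?_, b, fun P => hb P⟩
  obtain ⟨c, rfl⟩ := hPs hP
  exact ⟨MvPolynomial.isHomogeneous_natLinearForm c, MvPolynomial.natLinearForm ℤ c,
    (MvPolynomial.map_natLinearForm _ c).symm⟩

/-- For every `m ≥ 1` and `d ≥ 1` there exists a finite set of homogeneous polynomials of
degree 1 in `d` variables with integer coefficients such that their `m`-th powers form a
basis of the real vector space of homogeneous polynomials of degree `m` in `d` variables. -/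
theorem stmt_0 (m d : ℕ) (hm : 1 ≤ m) (hd : 1 ≤ d) :
    ∃ Ps : Finset (MvPolynomial (Fin d) ℝ),
      (∀ P ∈ Ps, MvPolynomial.IsHomogeneous P 1 ∧
        ∃ Q : MvPolynomial (Fin d) ℤ, P = MvPolynomial.map (Int.castRingHom ℝ) Q) ∧
      ∃ b : Module.Basis Ps ℝ (MvPolynomial.homogeneousSubmodule (Fin d) ℝ m),
        ∀ P : Ps, (b P : MvPolynomial (Fin d) ℝ) = (P : MvPolynomial (Fin d) ℝ) ^ m :=
  stmt_0_general m d
end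

section
/- For every d ≥ 1 and every nonzero vector k ∈ ℤ^d there exist vectors k¹, k², …, k^d ∈ ℤ^d with k¹ = k such that the vectors k¹, …, k^d are pairwise orthogonal with respect to the standard Euclidean inner product on ℝ^d and each kⁱ is nonzero; in particular (k¹, …, k^d) is an orthogonal basis of ℝ^d. -/
/-!
Fewer than `d` vectors in `R^d` (over any nontrivial commutative ring, in particular `ℤ`) have a
common nonzero orthogonal vector, because the `d` columns of the matrix they form are linearly
dependent in a free module of smaller rank. Starting from `k`, one thus extends greedily to `d`
pairwise orthogonal nonzero integer vectors. Nonzero pairwise orthogonal vectors of `ℝ^d` are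
linearly independent, so their real images form a basis.
-/

open Matrix

theorem exists_ne_zero_forall_dotProduct_eq_zero {R ι n : Type*} [CommRing R] [Nontrivial R]
    [Fintype ι] [Fintype n] (u : ι → n → R) (h : Fintype.card ι < Fintype.card n) :
    ∃ w : n → R, w ≠ 0 ∧ ∀ i, u i ⬝ᵥ w = 0 := by
  have hdep : ¬LinearIndependent R (fun l i => u i l : n → ι → R) := fun hli => by
    have := hli.fintype_card_le_finrank
    rw [Module.finrank_fintype_fun_eq_card] at this
    omega
  obtain ⟨g, hg, l, hl⟩ := Fintype.not_linearIndependent_iff.mp hdep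
  refine ⟨g, fun h0 => hl (congrFun h0 l), fun i => ?_⟩
  simpa [dotProduct, mul_comm] using congrFun hg i

theorem Fin.pairwise_snoc {α : Type*} {r : α → α → Prop} [Std.Symm r] {m : ℕ}
    {v : Fin m → α} {w : α} (hv : Pairwise fun i j => r (v i) (v j)) (hw : ∀ i, r (v i) w) :
    Pairwise fun i j =>
      r ((Fin.snoc v w : Fin (m + 1) → α) i) ((Fin.snoc v w : Fin (m + 1) → α) j) := by
  intro i j hij
  induction i using Fin.lastCases with
  | last =>
    induction j using Fin.lastCases with
    | last => exact absurd rfl hij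
    | cast j => simpa using Std.Symm.symm _ _ (hw j)
  | cast i =>
    induction j using Fin.lastCases with
    | last => simpa using hw i
    | cast j => simpa using hv (ne_of_apply_ne Fin.castSucc hij)

theorem exists_pairwise_dotProduct_eq_zero {R n : Type*} [CommRing R] [Nontrivial R] [Fintype n]
    {k : n → R} (hk : k ≠ 0) {m : ℕ} (hm : m < Fintype.card n) :
    ∃ v : Fin (m + 1) → n → R,
      v 0 = k ∧ (∀ i, v i ≠ 0) ∧ Pairwise fun i j => v i ⬝ᵥ v j = 0 := by
  induction m with
  | zero =>
    exact ⟨fun _ => k, rfl, fun _ => hk,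
      fun i j hij => (hij (Subsingleton.elim (α := Fin 1) i j)).elim⟩
  | succ m ih =>
    obtain ⟨v, hv0, hv, horth⟩ := ih (by omega)
    obtain ⟨w, hw, hvw⟩ := exists_ne_zero_forall_dotProduct_eq_zero v (by simpa using hm)
    refine ⟨Fin.snoc v w, by simpa using hv0, fun i => ?_, ?_⟩
    · induction i using Fin.lastCases with
      | last => simpa using hw
      | cast i => simpa using hv i
    · have : Std.Symm fun x y : n → R => x ⬝ᵥ y = 0 := ⟨fun x y h => by rwa [dotProduct_comm]⟩
      exact Fin.pairwise_snoc (r := fun x y => x ⬝ᵥ y = 0) horth hvw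

theorem linearIndependent_toLp_of_pairwise_dotProduct_eq_zero {ι n : Type*} [Fintype n]
    {v : ι → n → ℝ} (hv : ∀ i, v i ≠ 0) (horth : Pairwise fun i j => v i ⬝ᵥ v j = 0) :
    LinearIndependent ℝ fun i => WithLp.toLp 2 (v i) := by
  refine linearIndependent_of_ne_zero_of_inner_eq_zero (fun i => by simpa using hv i) ?_
  intro i j hij
  simpa [EuclideanSpace.inner_eq_star_dotProduct, dotProduct_comm] using horth hij

/-- For every `d ≥ 1` and every nonzero `k ∈ ℤ^d` there exist `k¹ = k, k², …, k^d ∈ ℤ^d`,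
pairwise orthogonal for the Euclidean inner product and all nonzero; in particular their
real images form an (orthogonal) basis of `ℝ^d`. -/
theorem stmt_2 (d : ℕ) (hd : 1 ≤ d) (k : Fin d → ℤ) (hk : k ≠ 0) :
    ∃ v : Fin d → (Fin d → ℤ),
      v ⟨0, hd⟩ = k ∧
      (∀ i, v i ≠ 0) ∧
      (∀ i j, i ≠ j → ∑ l, ((v i l : ℝ) * (v j l : ℝ)) = 0) ∧
      ∃ B : Module.Basis (Fin d) ℝ (EuclideanSpace ℝ (Fin d)),
        ∀ i l, B i l = (v i l : ℝ) := by
  obtain ⟨m, rfl⟩ : ∃ m, d = m + 1 := ⟨d - 1, by omega⟩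
  obtain ⟨v, hv0, hv, horth⟩ := exists_pairwise_dotProduct_eq_zero hk (m := m) (by simp)
  set vℝ : Fin (m + 1) → Fin (m + 1) → ℝ := fun i l => v i l
  have hvℝ : ∀ i, vℝ i ≠ 0 := fun i h => hv i (funext fun l => by simpa [vℝ] using congrFun h l)
  have horthℝ : Pairwise fun i j => vℝ i ⬝ᵥ vℝ j = 0 := fun i j hij => by
    simpa [vℝ, dotProduct] using congrArg (Int.cast : ℤ → ℝ) (horth hij)
  refine ⟨v, hv0, hv, fun i j hij => horthℝ hij, ?_⟩
  have hli := linearIndependent_toLp_of_pairwise_dotProduct_eq_zero hvℝ horthℝ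
  exact ⟨basisOfLinearIndependentOfCardEqFinrank hli (by simp), fun i l => by simp [vℝ]⟩
end

section
/- Let ψ : ℝ^d → ℝ be a C^∞-smooth ℤ^d-periodic function and let i ≠ j be indices in {1, …, d}. Then ∫_{[0,1]^d} (∂_i∂_j ψ(x))² dx ≤ ( ∫_{[0,1]^d} (∂_i∂_i ψ(x))² dx )^{1/2} · ( ∫_{[0,1]^d} (∂_j∂_j ψ(x))² dx )^{1/2}. -/
open MeasureTheory Set

section aux
variable {d : ℕ}

/-- translation invariance of fderiv for periodic functions -/
private lemma fderiv_periodic {G : (Fin d → ℝ) → ℝ} (hG : ContDiff ℝ (⊤ : ℕ∞) G)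
    (hper : ∀ (x : Fin d → ℝ) (m : Fin d → ℤ), G (x + fun i => (m i : ℝ)) = G x)
    (x : Fin d → ℝ) (m : Fin d → ℤ) :
    fderiv ℝ G (x + fun i => (m i : ℝ)) = fderiv ℝ G x := by
  set c : Fin d → ℝ := fun i => (m i : ℝ) with hc
  have h1 : HasFDerivAt (fun y => G (y + c)) (fderiv ℝ G (x + c)) x := by
    have := ((hG.differentiable (by simp) (x + c)).hasFDerivAt).comp x
      ((hasFDerivAt_id x).add_const c)
    simpa [Function.comp_def] using this
  have h2 : (fun y : Fin d → ℝ => G (y + c)) = G := funext fun y => hper y m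
  rw [h2] at h1
  exact h1.fderiv.symm

private lemma smooth_D {G : (Fin d → ℝ) → ℝ} (hG : ContDiff ℝ (⊤ : ℕ∞) G) (v : Fin d → ℝ) :
    ContDiff ℝ (⊤ : ℕ∞) (fun x => fderiv ℝ G x v) :=
  (hG.fderiv_right (by simp)).clm_apply contDiff_const

private lemma per_D {G : (Fin d → ℝ) → ℝ} (hG : ContDiff ℝ (⊤ : ℕ∞) G)
    (hper : ∀ (x : Fin d → ℝ) (m : Fin d → ℤ), G (x + fun i => (m i : ℝ)) = G x)
    (v : Fin d → ℝ) :
    ∀ (x : Fin d → ℝ) (m : Fin d → ℤ),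
      (fun x => fderiv ℝ G x v) (x + fun i => (m i : ℝ)) = fderiv ℝ G x v := by
  intro x m
  simp only [fderiv_periodic hG hper x m]

/-- symmetry of second derivatives -/
private lemma symm_D {G : (Fin d → ℝ) → ℝ} (hG : ContDiff ℝ (⊤ : ℕ∞) G) (v w x : Fin d → ℝ) :
    fderiv ℝ (fun y => fderiv ℝ G y w) x v = fderiv ℝ (fun y => fderiv ℝ G y v) x w := by
  have hd : Differentiable ℝ (fderiv ℝ G) := (hG.fderiv_right (m := (⊤ : ℕ∞)) (by simp)).differentiable (by simp)
  have key : ∀ u : Fin d → ℝ,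
      fderiv ℝ (fun y => fderiv ℝ G y u) x = (fderiv ℝ (fderiv ℝ G) x).flip u := by
    intro u
    rw [fderiv_clm_apply (hd x) (differentiableAt_const u)]
    simp
  rw [key, key]
  exact second_derivative_symmetric (fun y => (hG.differentiable (by simp) y).hasFDerivAt)
    (hd x).hasFDerivAt v w

end aux

section divpart
variable {n : ℕ}

private lemma integral_pderiv_eq_zero {G : (Fin (n+1) → ℝ) → ℝ} (hG : ContDiff ℝ (⊤ : ℕ∞) G)
    (hper : ∀ (x : Fin (n+1) → ℝ) (m : Fin (n+1) → ℤ), G (x + fun i => (m i : ℝ)) = G x)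
    (k : Fin (n+1)) :
    ∫ x in Icc (0 : Fin (n+1) → ℝ) 1, fderiv ℝ G x (Pi.single k 1) = 0 := by
  have hper1 : ∀ x : Fin (n+1) → ℝ, G (x + Pi.single k 1) = G x := by
    intro x
    have := hper x (Pi.single k 1)
    convert this using 2
    ext m
    by_cases h : m = k <;> simp [Pi.single_apply, h]
  have hle : (0 : Fin (n+1) → ℝ) ≤ 1 := fun _ => zero_le_one
  have key := integral_divergence_of_hasFDerivAt_off_countable'
    (0 : Fin (n+1) → ℝ) 1 hle
    (fun l => if l = k then G else 0)
    (fun l x => if l = k then fderiv ℝ G x else 0)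
    ∅ Set.countable_empty
    (fun l => by
      by_cases h : l = k
      · simpa [h] using hG.continuous.continuousOn
      · simp only [h, if_false]
        exact continuousOn_const)
    (fun x _ l => by
      by_cases h : l = k
      · simpa [h] using (hG.differentiable (by simp) x).hasFDerivAt
      · simp only [h, if_false]
        exact hasFDerivAt_const (0 : ℝ) x)
    (by
      have : (fun x : Fin (n+1) → ℝ =>
          ∑ l, (if l = k then fderiv ℝ G x else 0) (Pi.single l 1))
          = fun x => fderiv ℝ G x (Pi.single k 1) := by
        funext x
        rw [Finset.sum_eq_single k] <;> simp +contextual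
      rw [this]
      exact ((smooth_D hG _).continuous.continuousOn).integrableOn_compact isCompact_Icc)
  have h0 : ∫ x in Icc (0 : Fin (n+1) → ℝ) 1,
      ∑ l, ((fun l x => if l = k then fderiv ℝ G x else 0) l x) (Pi.single l 1)
      = ∫ x in Icc (0 : Fin (n+1) → ℝ) 1, fderiv ℝ G x (Pi.single k 1) := by
    congr 1
    funext x
    rw [Finset.sum_eq_single k] <;> simp +contextual
  rw [h0] at key
  rw [key]
  apply Finset.sum_eq_zero
  intro l _
  by_cases h : l = k
  · subst h
    have hins : ∀ x : Fin n → ℝ,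
        (l.insertNth (1 : ℝ) x : Fin (n+1) → ℝ)
          = (l.insertNth (0 : ℝ) x : Fin (n+1) → ℝ) + Pi.single l 1 := by
      intro x
      ext m
      refine Fin.succAboveCases l ?_ ?_ m
      · simp
      · intro p
        simp [Fin.succAbove_ne l p, Pi.single_eq_of_ne (Fin.succAbove_ne l p)]
    simp only [eq_self_iff_true, if_true, Pi.one_apply, Pi.zero_apply]
    rw [sub_eq_zero]
    refine setIntegral_congr_fun measurableSet_Icc fun x _ => ?_
    rw [hins x, hper1]
  · simp [h]

end divpart

private lemma parts {n : ℕ} {g h : (Fin (n+1) → ℝ) → ℝ}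
    (hg : ContDiff ℝ (⊤ : ℕ∞) g) (hh : ContDiff ℝ (⊤ : ℕ∞) h)
    (hgp : ∀ (x : Fin (n+1) → ℝ) (m : Fin (n+1) → ℤ), g (x + fun i => (m i : ℝ)) = g x)
    (hhp : ∀ (x : Fin (n+1) → ℝ) (m : Fin (n+1) → ℤ), h (x + fun i => (m i : ℝ)) = h x)
    (k : Fin (n+1)) :
    ∫ x in Icc (0 : Fin (n+1) → ℝ) 1, fderiv ℝ g x (Pi.single k 1) * h x
      = - ∫ x in Icc (0 : Fin (n+1) → ℝ) 1, g x * fderiv ℝ h x (Pi.single k 1) := by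
  have hgh : ContDiff ℝ (⊤ : ℕ∞) (fun x => g x * h x) := hg.mul hh
  have hghp : ∀ (x : Fin (n+1) → ℝ) (m : Fin (n+1) → ℤ),
      (fun x => g x * h x) (x + fun i => (m i : ℝ)) = (fun x => g x * h x) x := by
    intro x m
    simp only [hgp x m, hhp x m]
  have h0 := integral_pderiv_eq_zero hgh hghp k
  have hrw : ∀ x, fderiv ℝ (fun x => g x * h x) x (Pi.single k 1)
      = fderiv ℝ g x (Pi.single k 1) * h x + g x * fderiv ℝ h x (Pi.single k 1) := by
    intro x
    rw [fderiv_fun_mul (hg.differentiable (by simp) x) (hh.differentiable (by simp) x)]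
    simp only [ContinuousLinearMap.add_apply, ContinuousLinearMap.smul_apply, smul_eq_mul]
    ring
  have hA : IntegrableOn (fun x => fderiv ℝ g x (Pi.single k 1) * h x)
      (Icc (0 : Fin (n+1) → ℝ) 1) :=
    (((smooth_D hg _).continuous.mul hh.continuous).continuousOn).integrableOn_compact
      isCompact_Icc
  have hB : IntegrableOn (fun x => g x * fderiv ℝ h x (Pi.single k 1))
      (Icc (0 : Fin (n+1) → ℝ) 1) :=
    ((hg.continuous.mul (smooth_D hh _).continuous).continuousOn).integrableOn_compact
      isCompact_Icc
  have hsum : (∫ x in Icc (0 : Fin (n+1) → ℝ) 1,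
      (fderiv ℝ g x (Pi.single k 1) * h x + g x * fderiv ℝ h x (Pi.single k 1))) = 0 := by
    rw [← h0]
    exact setIntegral_congr_fun measurableSet_Icc fun x _ => (hrw x).symm
  rw [integral_add hA hB] at hsum
  linarith

/-- For a `C^∞`-smooth `ℤ^d`-periodic `ψ : ℝ^d → ℝ` and `i ≠ j`,
`∫ (∂_i∂_j ψ)² ≤ (∫ (∂_i∂_i ψ)²)^{1/2} · (∫ (∂_j∂_j ψ)²)^{1/2}`. -/
theorem stmt_6 (d : ℕ) (ψ : (Fin d → ℝ) → ℝ) (hψ : ContDiff ℝ (⊤ : ℕ∞) ψ)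
    (hper : ∀ (x : Fin d → ℝ) (n : Fin d → ℤ), ψ (x + fun i => (n i : ℝ)) = ψ x)
    (i j : Fin d) (hij : i ≠ j) :
    (∫ x in Set.Icc (0 : Fin d → ℝ) 1,
        (fderiv ℝ (fun y => fderiv ℝ ψ y (Pi.single j 1)) x (Pi.single i 1)) ^ 2) ≤
      Real.sqrt (∫ x in Set.Icc (0 : Fin d → ℝ) 1,
        (fderiv ℝ (fun y => fderiv ℝ ψ y (Pi.single i 1)) x (Pi.single i 1)) ^ 2) *
      Real.sqrt (∫ x in Set.Icc (0 : Fin d → ℝ) 1,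
        (fderiv ℝ (fun y => fderiv ℝ ψ y (Pi.single j 1)) x (Pi.single j 1)) ^ 2) := by
  obtain ⟨n, rfl⟩ : ∃ n, d = n + 1 := ⟨d - 1, (Nat.succ_pred_eq_of_pos i.pos).symm⟩
  have hDi : ContDiff ℝ (⊤ : ℕ∞) (fun x => fderiv ℝ ψ x (Pi.single i 1)) := smooth_D hψ _
  have hDj : ContDiff ℝ (⊤ : ℕ∞) (fun x => fderiv ℝ ψ x (Pi.single j 1)) := smooth_D hψ _
  have hpDi := per_D hψ hper (Pi.single i 1)
  have hpDj := per_D hψ hper (Pi.single j 1)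
  -- integration by parts (twice) and symmetry of second derivatives:
  have h1 := parts hDj (smooth_D hDi (Pi.single j 1)) hpDj (per_D hDi hpDi (Pi.single j 1)) i
  have h2 := parts hDj (smooth_D hDi (Pi.single i 1)) hpDj (per_D hDi hpDi (Pi.single i 1)) j
  have e1 : (∫ x in Icc (0 : Fin (n+1) → ℝ) 1,
        (fderiv ℝ (fun y => fderiv ℝ ψ y (Pi.single j 1)) x (Pi.single i 1)) ^ 2)
      = ∫ x in Icc (0 : Fin (n+1) → ℝ) 1,
        fderiv ℝ (fun y => fderiv ℝ ψ y (Pi.single j 1)) x (Pi.single i 1) *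
          fderiv ℝ (fun y => fderiv ℝ ψ y (Pi.single i 1)) x (Pi.single j 1) := by
    refine setIntegral_congr_fun measurableSet_Icc fun x _ => ?_
    rw [sq]
    congr 1
    exact symm_D hψ _ _ x
  have e3 : (∫ x in Icc (0 : Fin (n+1) → ℝ) 1,
        fderiv ℝ ψ x (Pi.single j 1) *
          fderiv ℝ (fun y => fderiv ℝ (fun z => fderiv ℝ ψ z (Pi.single i 1)) y (Pi.single j 1))
            x (Pi.single i 1))
      = ∫ x in Icc (0 : Fin (n+1) → ℝ) 1,
        fderiv ℝ ψ x (Pi.single j 1) *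
          fderiv ℝ (fun y => fderiv ℝ (fun z => fderiv ℝ ψ z (Pi.single i 1)) y (Pi.single i 1))
            x (Pi.single j 1) := by
    refine setIntegral_congr_fun measurableSet_Icc fun x _ => ?_
    congr 1
    exact symm_D hDi _ _ x
  have key : (∫ x in Icc (0 : Fin (n+1) → ℝ) 1,
        (fderiv ℝ (fun y => fderiv ℝ ψ y (Pi.single j 1)) x (Pi.single i 1)) ^ 2)
      = ∫ x in Icc (0 : Fin (n+1) → ℝ) 1,
        fderiv ℝ (fun y => fderiv ℝ ψ y (Pi.single j 1)) x (Pi.single j 1) *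
          fderiv ℝ (fun y => fderiv ℝ ψ y (Pi.single i 1)) x (Pi.single i 1) := by
    rw [e1, h1, e3, ← h2]
  rw [key]
  -- Cauchy–Schwarz
  have hGjc : Continuous (fun x : Fin (n+1) → ℝ =>
      fderiv ℝ (fun y => fderiv ℝ ψ y (Pi.single j 1)) x (Pi.single j 1)) :=
    (smooth_D hDj _).continuous
  have hFc : Continuous (fun x : Fin (n+1) → ℝ =>
      fderiv ℝ (fun y => fderiv ℝ ψ y (Pi.single i 1)) x (Pi.single i 1)) :=
    (smooth_D hDi _).continuous
  have hfin : IsFiniteMeasure (volume.restrict (Icc (0 : Fin (n+1) → ℝ) 1)) :=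
    ⟨by rw [Measure.restrict_apply_univ]; exact isCompact_Icc.measure_lt_top⟩
  have hmem : ∀ f : (Fin (n+1) → ℝ) → ℝ, Continuous f →
      MemLp f (ENNReal.ofReal 2) (volume.restrict (Icc (0 : Fin (n+1) → ℝ) 1)) := by
    intro f hf
    obtain ⟨C, hC⟩ := isCompact_Icc.exists_bound_of_continuousOn hf.continuousOn
    exact MemLp.of_bound hf.aestronglyMeasurable C
      ((ae_restrict_iff' measurableSet_Icc).2 (Filter.Eventually.of_forall fun x hx => hC x hx))
  have hpq : Real.HolderConjugate 2 2 := Real.HolderConjugate.two_two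
  have CS := integral_mul_norm_le_Lp_mul_Lq (μ := volume.restrict (Icc (0 : Fin (n+1) → ℝ) 1))
    hpq (hmem _ hGjc) (hmem _ hFc)
  have hsq : ∀ f : (Fin (n+1) → ℝ) → ℝ,
      (∫ x in Icc (0 : Fin (n+1) → ℝ) 1, ‖f x‖ ^ (2:ℝ)) =
        ∫ x in Icc (0 : Fin (n+1) → ℝ) 1, f x ^ 2 := by
    intro f
    refine integral_congr_ae (Filter.Eventually.of_forall fun x => ?_)
    beta_reduce
    rw [show ((2:ℝ)) = ((2:ℕ):ℝ) by norm_num, Real.rpow_natCast, Real.norm_eq_abs, sq_abs]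
  rw [hsq, hsq] at CS
  have habs : (∫ x in Icc (0 : Fin (n+1) → ℝ) 1,
      fderiv ℝ (fun y => fderiv ℝ ψ y (Pi.single j 1)) x (Pi.single j 1) *
        fderiv ℝ (fun y => fderiv ℝ ψ y (Pi.single i 1)) x (Pi.single i 1))
      ≤ ∫ x in Icc (0 : Fin (n+1) → ℝ) 1,
        ‖fderiv ℝ (fun y => fderiv ℝ ψ y (Pi.single j 1)) x (Pi.single j 1)‖ *
          ‖fderiv ℝ (fun y => fderiv ℝ ψ y (Pi.single i 1)) x (Pi.single i 1)‖ := by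
    refine integral_mono ?_ ?_ fun x => ?_
    · exact ((hGjc.mul hFc).continuousOn).integrableOn_compact isCompact_Icc
    · exact ((hGjc.norm.mul hFc.norm).continuousOn).integrableOn_compact isCompact_Icc
    · calc _ ≤ |_| := le_abs_self _
        _ = _ := by rw [abs_mul]; rfl
  refine (habs.trans CS).trans ?_
  rw [← Real.sqrt_eq_rpow, ← Real.sqrt_eq_rpow, mul_comm]
end

section
/- Let f : ℝ^d → ℝ be C^∞-smooth, let ν > 0, let T > 0, and let g : [0,T] × ℝ^d → ℝ be continuous and ℤ^d-periodic in the space variable. Suppose ψ₁, ψ₂ : [0,T] × ℝ^d → ℝ are continuous on [0,T] × ℝ^d, C^∞-smooth on (0,T] × ℝ^d, ℤ^d-periodic in the space variable, and both satisfy the forced viscous Hamilton–Jacobi equation ∂_t ψ_a + f(∇ψ_a) − ν·Δψ_a = g on (0,T] × ℝ^d (a = 1, 2), with the same forcing g. Then for every t ∈ [0,T]: sup_{x ∈ ℝ^d} |ψ₁(t,x) − ψ₂(t,x)| ≤ sup_{x ∈ ℝ^d} |ψ₁(0,x) − ψ₂(0,x)|. -/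
open MeasureTheory

open Set Filter Topology

open Set Filter Topology

lemma aux_left_deriv_nonneg {φ : ℝ → ℝ} {c t₀ : ℝ} (ht₀ : 0 < t₀)
    (hd : HasDerivWithinAt φ c (Set.Icc 0 t₀) t₀)
    (hmax : ∀ s ∈ Set.Icc (0:ℝ) t₀, φ s ≤ φ t₀) : 0 ≤ c := by
  have h1 : Set.Icc (0:ℝ) t₀ \ {t₀} = Set.Ico 0 t₀ := by
    ext s
    simp only [Set.mem_diff, Set.mem_Icc, Set.mem_Ico, Set.mem_singleton_iff]
    constructor
    · rintro ⟨⟨h0, h1⟩, h2⟩; exact ⟨h0, lt_of_le_of_ne h1 h2⟩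
    · rintro ⟨h0, h1⟩; exact ⟨⟨h0, le_of_lt h1⟩, ne_of_lt h1⟩
  have hslope := hasDerivWithinAt_iff_tendsto_slope.mp hd
  rw [h1] at hslope
  have hne : (𝓝[Set.Ico (0:ℝ) t₀] t₀).NeBot := right_nhdsWithin_Ico_neBot ht₀
  refine ge_of_tendsto hslope ?_
  filter_upwards [self_mem_nhdsWithin] with s hs
  rw [slope_def_field]
  have h2 : φ s - φ t₀ ≤ 0 := sub_nonpos.2 (hmax s ⟨hs.1, le_of_lt hs.2⟩)
  have h3 : s - t₀ < 0 := sub_neg.2 hs.2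
  exact div_nonneg_iff.mpr (Or.inr ⟨h2, le_of_lt h3⟩)

lemma aux_second_deriv_nonpos {φ : ℝ → ℝ} {c : ℝ} (hφ : Differentiable ℝ φ)
    (hdd : HasDerivAt (deriv φ) c 0) (hmax : ∀ s : ℝ, φ s ≤ φ 0) : c ≤ 0 := by
  by_contra hc
  push_neg at hc
  have h0 : deriv φ 0 = 0 := by
    have : IsLocalMax φ 0 := Filter.Eventually.of_forall hmax
    exact this.deriv_eq_zero
  have hslope := hasDerivAt_iff_tendsto_slope.mp hdd
  have hslope' : Tendsto (slope (deriv φ) 0) (𝓝[>] (0:ℝ)) (𝓝 c) :=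
    hslope.mono_left (nhdsWithin_mono 0 (fun s hs => ne_of_gt hs))
  have hev : ∀ᶠ s in 𝓝[>] (0:ℝ), 0 < slope (deriv φ) 0 s :=
    hslope'.eventually (lt_mem_nhds hc)
  rw [eventually_nhdsWithin_iff] at hev
  obtain ⟨δ, hδpos, hδ⟩ := Metric.eventually_nhds_iff.mp hev
  set δ' := δ / 2 with hδ'
  have hδ'pos : 0 < δ' := by positivity
  have hderivpos : ∀ s ∈ Set.Ioo (0:ℝ) δ', 0 < deriv φ s := by
    intro s hs
    have hdist : dist s 0 < δ := by
      rw [Real.dist_eq, sub_zero, abs_of_pos hs.1]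
      linarith [hs.2]
    have := hδ hdist hs.1
    rw [slope_def_field, h0, sub_zero, sub_zero] at this
    have := mul_pos this hs.1
    rwa [div_mul_cancel₀] at this
    exact ne_of_gt hs.1
  have hmono : StrictMonoOn φ (Set.Icc 0 δ') := by
    apply strictMonoOn_of_deriv_pos (convex_Icc 0 δ') (hφ.continuous.continuousOn)
    intro s hs
    rw [interior_Icc] at hs
    exact hderivpos s hs
  have := hmono (Set.left_mem_Icc.2 (le_of_lt hδ'pos)) (Set.right_mem_Icc.2 (le_of_lt hδ'pos)) hδ'pos
  exact absurd (hmax δ') (not_le.2 this)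

lemma hj_key {d : ℕ} {f : (Fin d → ℝ) → ℝ}
    {ν T : ℝ} (hν : 0 < ν)
    {g ψ₁ ψ₂ : ℝ × (Fin d → ℝ) → ℝ}
    (hcont₁ : ContinuousOn ψ₁ (Set.Icc 0 T ×ˢ (Set.univ : Set (Fin d → ℝ))))
    (hcont₂ : ContinuousOn ψ₂ (Set.Icc 0 T ×ˢ (Set.univ : Set (Fin d → ℝ))))
    (hsmooth₁ : ContDiffOn ℝ (⊤ : ℕ∞) ψ₁ (Set.Ioc 0 T ×ˢ (Set.univ : Set (Fin d → ℝ))))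
    (hsmooth₂ : ContDiffOn ℝ (⊤ : ℕ∞) ψ₂ (Set.Ioc 0 T ×ˢ (Set.univ : Set (Fin d → ℝ))))
    (hper₁ : ∀ t ∈ Set.Icc (0:ℝ) T, ∀ (x : Fin d → ℝ) (n : Fin d → ℤ),
      ψ₁ (t, x + fun i => (n i : ℝ)) = ψ₁ (t, x))
    (hper₂ : ∀ t ∈ Set.Icc (0:ℝ) T, ∀ (x : Fin d → ℝ) (n : Fin d → ℤ),
      ψ₂ (t, x + fun i => (n i : ℝ)) = ψ₂ (t, x))
    (hpde₁ : ∀ t ∈ Set.Ioc (0:ℝ) T, ∀ x : Fin d → ℝ,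
        derivWithin (fun s => ψ₁ (s, x)) (Set.Icc 0 T) t
          + f (fun i => fderiv ℝ (fun y => ψ₁ (t, y)) x (Pi.single i 1))
          - ν * ∑ i, fderiv ℝ (fun y => fderiv ℝ (fun z => ψ₁ (t, z)) y (Pi.single i 1)) x
              (Pi.single i 1)
        = g (t, x))
    (hpde₂ : ∀ t ∈ Set.Ioc (0:ℝ) T, ∀ x : Fin d → ℝ,
        derivWithin (fun s => ψ₂ (s, x)) (Set.Icc 0 T) t
          + f (fun i => fderiv ℝ (fun y => ψ₂ (t, y)) x (Pi.single i 1))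
          - ν * ∑ i, fderiv ℝ (fun y => fderiv ℝ (fun z => ψ₂ (t, z)) y (Pi.single i 1)) x
              (Pi.single i 1)
        = g (t, x))
    {M0 : ℝ} (hM0 : ∀ x, ψ₁ (0, x) - ψ₂ (0, x) ≤ M0) :
    ∀ t ∈ Set.Icc (0:ℝ) T, ∀ x, ψ₁ (t, x) - ψ₂ (t, x) ≤ M0 := by
  -- slice smoothness helpers
  have slice_smooth : ∀ (a : ℝ × (Fin d → ℝ) → ℝ),
      ContDiffOn ℝ (⊤ : ℕ∞) a (Set.Ioc 0 T ×ˢ (Set.univ : Set (Fin d → ℝ))) →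
      ∀ t ∈ Set.Ioc (0:ℝ) T, ContDiff ℝ (⊤ : ℕ∞) (fun y => a (t, y)) := by
    intro a ha t ht
    rw [← contDiffOn_univ]
    exact ha.comp ((contDiff_const.prodMk contDiff_id).contDiffOn)
      (fun y _ => Set.mem_prod.2 ⟨ht, Set.mem_univ _⟩)
  have tslice_smooth : ∀ (a : ℝ × (Fin d → ℝ) → ℝ),
      ContDiffOn ℝ (⊤ : ℕ∞) a (Set.Ioc 0 T ×ˢ (Set.univ : Set (Fin d → ℝ))) →
      ∀ x : Fin d → ℝ, ContDiffOn ℝ (⊤ : ℕ∞) (fun s => a (s, x)) (Set.Ioc 0 T) := by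
    intro a ha x
    exact ha.comp ((contDiff_id.prodMk contDiff_const).contDiffOn)
      (fun s hs => Set.mem_prod.2 ⟨hs, Set.mem_univ _⟩)
  -- fractional part reduction
  set F : (Fin d → ℝ) → (Fin d → ℝ) := fun y i => Int.fract (y i) with hF
  have hF_mem : ∀ y, F y ∈ Set.Icc (0 : Fin d → ℝ) 1 := by
    intro y
    constructor
    · intro i; exact Int.fract_nonneg (y i)
    · intro i; exact (Int.fract_lt_one (y i)).le
  have hFper : ∀ (a : ℝ × (Fin d → ℝ) → ℝ),
      (∀ t ∈ Set.Icc (0:ℝ) T, ∀ (x : Fin d → ℝ) (n : Fin d → ℤ),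
        a (t, x + fun i => (n i : ℝ)) = a (t, x)) →
      ∀ t ∈ Set.Icc (0:ℝ) T, ∀ y, a (t, F y) = a (t, y) := by
    intro a hpa t ht y
    have key := hpa t ht (F y) (fun i => ⌊y i⌋)
    have : (F y + fun i => ((⌊y i⌋ : ℤ) : ℝ)) = y := by
      funext i
      simp only [Pi.add_apply, hF]
      exact Int.fract_add_floor (y i)
    rw [this] at key
    exact key.symm
  intro tst htst x
  rcases eq_or_lt_of_le htst.1 with h0 | htpos
  · rw [← h0]; exact hM0 x
  -- main case: 0 < tst
  have hsuff : ∀ ε > 0, ψ₁ (tst, x) - ψ₂ (tst, x) ≤ M0 + ε * tst := by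
    intro ε hε
    set u : ℝ × (Fin d → ℝ) → ℝ := fun p => ψ₁ p - ψ₂ p - ε * p.1 with hu
    set K := Set.Icc (0:ℝ) tst ×ˢ Set.Icc (0 : Fin d → ℝ) 1 with hK
    have hKcompact : IsCompact K := isCompact_Icc.prod isCompact_Icc
    have hKsub : K ⊆ Set.Icc 0 T ×ˢ (Set.univ : Set (Fin d → ℝ)) :=
      Set.prod_mono (Set.Icc_subset_Icc le_rfl htst.2) (Set.subset_univ _)
    have hucont : ContinuousOn u K :=
      (((hcont₁.sub hcont₂).mono hKsub).sub
        ((continuous_const.mul continuous_fst).continuousOn))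
    have hKne : K.Nonempty :=
      ⟨(0, 0), Set.mk_mem_prod ⟨le_rfl, le_of_lt htpos⟩ ⟨le_rfl, zero_le_one⟩⟩
    obtain ⟨p₀, hp₀K, hp₀max⟩ := hKcompact.exists_isMaxOn hKne hucont
    obtain ⟨t₀, x₀⟩ := p₀
    have ht₀mem : t₀ ∈ Set.Icc (0:ℝ) tst := (Set.mem_prod.1 hp₀K).1
    have hred : ∀ s ∈ Set.Icc (0:ℝ) tst, ∀ y, u (s, y) ≤ u (t₀, x₀) := by
      intro s hs y
      have hsT : s ∈ Set.Icc (0:ℝ) T := ⟨hs.1, hs.2.trans htst.2⟩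
      have h1 : u (s, F y) = u (s, y) := by
        simp only [hu]
        rw [hFper ψ₁ hper₁ s hsT y, hFper ψ₂ hper₂ s hsT y]
      calc u (s, y) = u (s, F y) := h1.symm
        _ ≤ u (t₀, x₀) := hp₀max (Set.mk_mem_prod hs (hF_mem y))
    rcases eq_or_lt_of_le ht₀mem.1 with ht₀0 | ht₀pos
    · -- max at t₀ = 0
      have h1 := hred tst ⟨le_of_lt htpos, le_rfl⟩ x
      have h2 : ψ₁ (t₀, x₀) - ψ₂ (t₀, x₀) - ε * t₀ ≤ M0 := by
        rw [← ht₀0]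
        have := hM0 x₀
        linarith
      simp only [hu] at h1
      linarith
    · -- interior (in time) maximum: contradiction
      exfalso
      have ht₀Ioc : t₀ ∈ Set.Ioc (0:ℝ) T := ⟨ht₀pos, ht₀mem.2.trans htst.2⟩
      have hs₁ : ContDiff ℝ (⊤ : ℕ∞) (fun y => ψ₁ (t₀, y)) := slice_smooth ψ₁ hsmooth₁ t₀ ht₀Ioc
      have hs₂ : ContDiff ℝ (⊤ : ℕ∞) (fun y => ψ₂ (t₀, y)) := slice_smooth ψ₂ hsmooth₂ t₀ ht₀Ioc
      set h : (Fin d → ℝ) → ℝ := fun y => ψ₁ (t₀, y) - ψ₂ (t₀, y) with hh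
      have hhsmooth : ContDiff ℝ (⊤ : ℕ∞) h := hs₁.sub hs₂
      have hhmax : ∀ y, h y ≤ h x₀ := by
        intro y
        have := hred t₀ ht₀mem y
        simp only [hu, hh] at this ⊢
        linarith
      have hlm : IsLocalMax h x₀ := Filter.Eventually.of_forall hhmax
      have hgrad0 : fderiv ℝ h x₀ = 0 := hlm.fderiv_eq_zero
      have hgrad : ∀ v, fderiv ℝ (fun y => ψ₁ (t₀, y)) x₀ v
          = fderiv ℝ (fun y => ψ₂ (t₀, y)) x₀ v := by
        intro v
        have hd₁ : DifferentiableAt ℝ (fun y => ψ₁ (t₀, y)) x₀ := (hs₁.differentiable (by simp)) x₀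
        have hd₂ : DifferentiableAt ℝ (fun y => ψ₂ (t₀, y)) x₀ := (hs₂.differentiable (by simp)) x₀
        have hsub : fderiv ℝ h x₀ = fderiv ℝ (fun y => ψ₁ (t₀, y)) x₀
            - fderiv ℝ (fun y => ψ₂ (t₀, y)) x₀ := fderiv_sub hd₁ hd₂
        rw [hgrad0] at hsub
        have := congrArg (fun (L : (Fin d → ℝ) →L[ℝ] ℝ) => L v) hsub
        simp only [ContinuousLinearMap.zero_apply, ContinuousLinearMap.sub_apply] at this
        linarith
      have hfeq : (fun i => fderiv ℝ (fun y => ψ₁ (t₀, y)) x₀ (Pi.single i 1))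
          = fun i => fderiv ℝ (fun y => ψ₂ (t₀, y)) x₀ (Pi.single i 1) :=
        funext fun i => hgrad _
      -- second derivatives
      have hsecond : ∀ i : Fin d,
          fderiv ℝ (fun y => fderiv ℝ (fun z => ψ₁ (t₀, z)) y (Pi.single i 1)) x₀ (Pi.single i 1)
          - fderiv ℝ (fun y => fderiv ℝ (fun z => ψ₂ (t₀, z)) y (Pi.single i 1)) x₀
              (Pi.single i 1) ≤ 0 := by
        intro i
        set e : Fin d → ℝ := Pi.single i 1 with he
        set G : (Fin d → ℝ) → ℝ := fun y => fderiv ℝ h y e with hG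
        have hGsmooth : ContDiff ℝ (⊤ : ℕ∞) G :=
          (hhsmooth.fderiv_right (by simp)).clm_apply contDiff_const
        set L : ℝ → (Fin d → ℝ) := fun s => x₀ + s • e with hL
        have hL0 : L 0 = x₀ := by simp [hL]
        have hLd : ∀ s : ℝ, HasDerivAt L e s := by
          intro s
          have h1 : HasDerivAt (fun s : ℝ => s • e) ((1:ℝ) • e) s :=
            (hasDerivAt_id s).smul_const e
          have h2 : HasDerivAt (fun s : ℝ => s • e) e s := by simpa using h1
          exact h2.const_add x₀
        set φ : ℝ → ℝ := fun s => h (L s) with hφ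
        have hφd : ∀ s, HasDerivAt φ (fderiv ℝ h (L s) e) s := fun s =>
          (hhsmooth.differentiable (by simp) (L s)).hasFDerivAt.comp_hasDerivAt s (hLd s)
        have hφdiff : Differentiable ℝ φ := fun s => (hφd s).differentiableAt
        have hderivφ : deriv φ = fun s => G (L s) := funext fun s => (hφd s).deriv
        have hGd : HasDerivAt (fun s => G (L s)) (fderiv ℝ G x₀ e) 0 := by
          have := (hGsmooth.differentiable (by simp) (L 0)).hasFDerivAt.comp_hasDerivAt 0 (hLd 0)
          rwa [hL0] at this
        have hdd : HasDerivAt (deriv φ) (fderiv ℝ G x₀ e) 0 := by rw [hderivφ]; exact hGd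
        have hφmax : ∀ s, φ s ≤ φ 0 := by
          intro s
          simp only [hφ, hL0]
          exact hhmax (L s)
        have hle : fderiv ℝ G x₀ e ≤ 0 := aux_second_deriv_nonpos hφdiff hdd hφmax
        have hG₁s : ContDiff ℝ (⊤ : ℕ∞) (fun y => fderiv ℝ (fun z => ψ₁ (t₀, z)) y e) :=
          (hs₁.fderiv_right (by simp)).clm_apply contDiff_const
        have hG₂s : ContDiff ℝ (⊤ : ℕ∞) (fun y => fderiv ℝ (fun z => ψ₂ (t₀, z)) y e) :=
          (hs₂.fderiv_right (by simp)).clm_apply contDiff_const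
        have hGeq : G = fun y => (fderiv ℝ (fun z => ψ₁ (t₀, z)) y e)
            - (fderiv ℝ (fun z => ψ₂ (t₀, z)) y e) := by
          funext y
          simp only [hG, hh]
          rw [fderiv_fun_sub ((hs₁.differentiable (by simp)) y) ((hs₂.differentiable (by simp)) y)]
          simp
        have hfinal : fderiv ℝ G x₀ e
            = fderiv ℝ (fun y => fderiv ℝ (fun z => ψ₁ (t₀, z)) y e) x₀ e
            - fderiv ℝ (fun y => fderiv ℝ (fun z => ψ₂ (t₀, z)) y e) x₀ e := by
          rw [hGeq, fderiv_fun_sub (hG₁s.differentiable (by simp) x₀) (hG₂s.differentiable (by simp) x₀)]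
          simp
        rw [hfinal] at hle
        exact hle
      have hΔ : (∑ i, fderiv ℝ (fun y => fderiv ℝ (fun z => ψ₁ (t₀, z)) y (Pi.single i 1)) x₀
              (Pi.single i 1))
          - (∑ i, fderiv ℝ (fun y => fderiv ℝ (fun z => ψ₂ (t₀, z)) y (Pi.single i 1)) x₀
              (Pi.single i 1)) ≤ 0 := by
        rw [← Finset.sum_sub_distrib]
        exact Finset.sum_nonpos (fun i _ => hsecond i)
      -- time derivative
      have hIocmem : Set.Ioc (0:ℝ) T ∈ 𝓝[Set.Icc (0:ℝ) T] t₀ :=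
        mem_nhdsWithin.mpr ⟨Set.Ioi 0, isOpen_Ioi, ht₀pos, fun s hs => ⟨hs.1, hs.2.2⟩⟩
      have hdm₁ : DifferentiableWithinAt ℝ (fun s => ψ₁ (s, x₀)) (Set.Icc 0 T) t₀ :=
        ((((tslice_smooth ψ₁ hsmooth₁ x₀).differentiableOn (by simp)) t₀ ht₀Ioc).mono_of_mem_nhdsWithin
          hIocmem)
      have hdm₂ : DifferentiableWithinAt ℝ (fun s => ψ₂ (s, x₀)) (Set.Icc 0 T) t₀ :=
        ((((tslice_smooth ψ₂ hsmooth₂ x₀).differentiableOn (by simp)) t₀ ht₀Ioc).mono_of_mem_nhdsWithin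
          hIocmem)
      set D₁ := derivWithin (fun s => ψ₁ (s, x₀)) (Set.Icc 0 T) t₀ with hD₁def
      set D₂ := derivWithin (fun s => ψ₂ (s, x₀)) (Set.Icc 0 T) t₀ with hD₂def
      have hD₁ : HasDerivWithinAt (fun s => ψ₁ (s, x₀)) D₁ (Set.Icc 0 T) t₀ :=
        hdm₁.hasDerivWithinAt
      have hD₂ : HasDerivWithinAt (fun s => ψ₂ (s, x₀)) D₂ (Set.Icc 0 T) t₀ :=
        hdm₂.hasDerivWithinAt
      have hεfun : HasDerivWithinAt (fun s : ℝ => ε * s) ε (Set.Icc 0 T) t₀ := by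
        simpa using (hasDerivWithinAt_id t₀ (Set.Icc (0:ℝ) T)).const_mul ε
      have hmd : HasDerivWithinAt (fun s => ψ₁ (s, x₀) - ψ₂ (s, x₀) - ε * s)
          (D₁ - D₂ - ε) (Set.Icc 0 T) t₀ := (hD₁.sub hD₂).sub hεfun
      have hmd' : HasDerivWithinAt (fun s => ψ₁ (s, x₀) - ψ₂ (s, x₀) - ε * s)
          (D₁ - D₂ - ε) (Set.Icc 0 t₀) t₀ :=
        hmd.mono (Set.Icc_subset_Icc le_rfl ht₀Ioc.2)
      have hmmax : ∀ s ∈ Set.Icc (0:ℝ) t₀,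
          (fun s => ψ₁ (s, x₀) - ψ₂ (s, x₀) - ε * s) s
          ≤ (fun s => ψ₁ (s, x₀) - ψ₂ (s, x₀) - ε * s) t₀ := by
        intro s hs
        have := hred s ⟨hs.1, hs.2.trans ht₀mem.2⟩ x₀
        have h2 := hred t₀ ht₀mem x₀
        simp only [hu] at this
        simpa using this
      have hderivsign : 0 ≤ D₁ - D₂ - ε :=
        aux_left_deriv_nonneg ht₀pos hmd' hmmax
      -- PDE
      have hp₁ := hpde₁ t₀ ht₀Ioc x₀
      have hp₂ := hpde₂ t₀ ht₀Ioc x₀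
      rw [hfeq] at hp₁
      have hνΔ : ν * ((∑ i, fderiv ℝ (fun y => fderiv ℝ (fun z => ψ₁ (t₀, z)) y (Pi.single i 1))
            x₀ (Pi.single i 1))
          - (∑ i, fderiv ℝ (fun y => fderiv ℝ (fun z => ψ₂ (t₀, z)) y (Pi.single i 1)) x₀
            (Pi.single i 1))) ≤ 0 :=
        mul_nonpos_of_nonneg_of_nonpos (le_of_lt hν) hΔ
      rw [← hD₁def] at hp₁
      rw [← hD₂def] at hp₂
      nlinarith [hp₁, hp₂, hderivsign, hνΔ, hε]
  -- conclude from hsuff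
  by_contra hcon
  push_neg at hcon
  set c := ψ₁ (tst, x) - ψ₂ (tst, x) - M0 with hc
  have hcpos : 0 < c := by simp only [hc]; linarith
  have hεpos : 0 < c / (2 * tst) := by positivity
  have := hsuff (c / (2 * tst)) hεpos
  have heq : c / (2 * tst) * tst = c / 2 := by
    field_simp
  rw [heq] at this
  simp only [hc] at this
  linarith

/-- `L_∞`-contraction for the flow of the forced viscous Hamilton–Jacobi equation:
two space-periodic solutions of `∂_t ψ + f(∇ψ) − ν·Δψ = g` with the same forcing satisfy
`sup_x |ψ₁(t,x) − ψ₂(t,x)| ≤ sup_x |ψ₁(0,x) − ψ₂(0,x)|` for every `t ∈ [0,T]`. -/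
theorem stmt_7 (d : ℕ) (f : (Fin d → ℝ) → ℝ) (hf : ContDiff ℝ (⊤ : ℕ∞) f)
    (ν T : ℝ) (hν : 0 < ν) (hT : 0 < T)
    (g : ℝ × (Fin d → ℝ) → ℝ)
    (hgcont : ContinuousOn g (Set.Icc 0 T ×ˢ (Set.univ : Set (Fin d → ℝ))))
    (hgper : ∀ t ∈ Set.Icc (0 : ℝ) T, ∀ (x : Fin d → ℝ) (n : Fin d → ℤ),
      g (t, x + fun i => (n i : ℝ)) = g (t, x))
    (ψ₁ ψ₂ : ℝ × (Fin d → ℝ) → ℝ)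
    (hcont : ∀ a ∈ ({ψ₁, ψ₂} : Set (ℝ × (Fin d → ℝ) → ℝ)),
      ContinuousOn a (Set.Icc 0 T ×ˢ (Set.univ : Set (Fin d → ℝ))))
    (hsmooth : ∀ a ∈ ({ψ₁, ψ₂} : Set (ℝ × (Fin d → ℝ) → ℝ)),
      ContDiffOn ℝ (⊤ : ℕ∞) a (Set.Ioc 0 T ×ˢ (Set.univ : Set (Fin d → ℝ))))
    (hper : ∀ a ∈ ({ψ₁, ψ₂} : Set (ℝ × (Fin d → ℝ) → ℝ)),
      ∀ t ∈ Set.Icc (0 : ℝ) T, ∀ (x : Fin d → ℝ) (n : Fin d → ℤ),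
        a (t, x + fun i => (n i : ℝ)) = a (t, x))
    (hpde : ∀ a ∈ ({ψ₁, ψ₂} : Set (ℝ × (Fin d → ℝ) → ℝ)),
      ∀ t ∈ Set.Ioc (0 : ℝ) T, ∀ x : Fin d → ℝ,
        derivWithin (fun s => a (s, x)) (Set.Icc 0 T) t
          + f (fun i => fderiv ℝ (fun y => a (t, y)) x (Pi.single i 1))
          - ν * ∑ i, fderiv ℝ (fun y => fderiv ℝ (fun z => a (t, z)) y (Pi.single i 1)) x
              (Pi.single i 1)
        = g (t, x)) :
    ∀ t ∈ Set.Icc (0 : ℝ) T,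
      (⨆ x : Fin d → ℝ, |ψ₁ (t, x) - ψ₂ (t, x)|) ≤
        ⨆ x : Fin d → ℝ, |ψ₁ (0, x) - ψ₂ (0, x)| := by
  have hmem₁ : ψ₁ ∈ ({ψ₁, ψ₂} : Set (ℝ × (Fin d → ℝ) → ℝ)) := Set.mem_insert _ _
  have hmem₂ : ψ₂ ∈ ({ψ₁, ψ₂} : Set (ℝ × (Fin d → ℝ) → ℝ)) :=
    Set.mem_insert_of_mem _ rfl
  have hcont₁ := hcont ψ₁ hmem₁
  have hcont₂ := hcont ψ₂ hmem₂
  have hsmooth₁ := hsmooth ψ₁ hmem₁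
  have hsmooth₂ := hsmooth ψ₂ hmem₂
  have hper₁ := hper ψ₁ hmem₁
  have hper₂ := hper ψ₂ hmem₂
  have hpde₁ := hpde ψ₁ hmem₁
  have hpde₂ := hpde ψ₂ hmem₂
  intro t ht
  -- the function at time 0 on the unit cube
  set q : (Fin d → ℝ) → ℝ := fun x => |ψ₁ (0, x) - ψ₂ (0, x)| with hq
  have h0T : (0:ℝ) ∈ Set.Icc (0:ℝ) T := ⟨le_rfl, le_of_lt hT⟩
  have hqcont : ContinuousOn q (Set.Icc (0 : Fin d → ℝ) 1) := by
    have hmap : ∀ y ∈ Set.Icc (0 : Fin d → ℝ) 1,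
        ((0:ℝ), y) ∈ Set.Icc (0:ℝ) T ×ˢ (Set.univ : Set (Fin d → ℝ)) :=
      fun y _ => Set.mk_mem_prod h0T (Set.mem_univ _)
    have h1 : ContinuousOn (fun y : Fin d → ℝ => ψ₁ (0, y)) (Set.Icc 0 1) :=
      hcont₁.comp (continuous_const.prodMk continuous_id).continuousOn hmap
    have h2 : ContinuousOn (fun y : Fin d → ℝ => ψ₂ (0, y)) (Set.Icc 0 1) :=
      hcont₂.comp (continuous_const.prodMk continuous_id).continuousOn hmap
    exact (h1.sub h2).abs
  have hcubene : (Set.Icc (0 : Fin d → ℝ) 1).Nonempty := ⟨0, le_rfl, zero_le_one⟩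
  obtain ⟨xm, hxm, hxmmax⟩ := isCompact_Icc.exists_isMaxOn hcubene hqcont
  set M0 := q xm with hM0def
  -- periodic reduction at time 0
  have hM0all : ∀ x, q x ≤ M0 := by
    intro x
    set Fx : Fin d → ℝ := fun i => Int.fract (x i) with hFx
    have hFmem : Fx ∈ Set.Icc (0 : Fin d → ℝ) 1 :=
      ⟨fun i => Int.fract_nonneg (x i), fun i => (Int.fract_lt_one (x i)).le⟩
    have hsum : (Fx + fun i => ((⌊x i⌋ : ℤ) : ℝ)) = x := by
      funext i
      simp only [Pi.add_apply, hFx]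
      exact Int.fract_add_floor (x i)
    have he₁ : ψ₁ (0, Fx) = ψ₁ (0, x) := by
      have := hper₁ 0 h0T Fx (fun i => ⌊x i⌋)
      rw [hsum] at this; exact this.symm
    have he₂ : ψ₂ (0, Fx) = ψ₂ (0, x) := by
      have := hper₂ 0 h0T Fx (fun i => ⌊x i⌋)
      rw [hsum] at this; exact this.symm
    have : q Fx = q x := by simp only [hq, he₁, he₂]
    rw [← this]
    exact hxmmax hFmem
  have hM0₁ : ∀ x, ψ₁ (0, x) - ψ₂ (0, x) ≤ M0 :=
    fun x => (le_abs_self _).trans (hM0all x)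
  have hM0₂ : ∀ x, ψ₂ (0, x) - ψ₁ (0, x) ≤ M0 := by
    intro x
    have : ψ₂ (0, x) - ψ₁ (0, x) ≤ |ψ₁ (0, x) - ψ₂ (0, x)| := by
      rw [abs_sub_comm]
      exact le_abs_self _
    exact this.trans (hM0all x)
  have h1 := hj_key hν hcont₁ hcont₂ hsmooth₁ hsmooth₂ hper₁ hper₂ hpde₁ hpde₂ hM0₁ t ht
  have h2 := hj_key hν hcont₂ hcont₁ hsmooth₂ hsmooth₁ hper₂ hper₁ hpde₂ hpde₁ hM0₂ t ht
  have habs : ∀ x, |ψ₁ (t, x) - ψ₂ (t, x)| ≤ M0 :=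
    fun x => abs_sub_le_iff.2 ⟨h1 x, h2 x⟩
  have hbdd : BddAbove (Set.range q) := by
    refine ⟨M0, ?_⟩
    rintro _ ⟨x, rfl⟩
    exact hM0all x
  have hM0le : M0 ≤ ⨆ x, q x := le_ciSup hbdd xm
  exact ciSup_le (fun x => (habs x).trans hM0le)
end

section
/- Let σ > 0, ν > 0, T > 0, and let f : ℝ^d → ℝ be C^∞-smooth and strongly convex in the sense that vᵀ·D²f(x)·v ≥ σ·|v|² for all x, v ∈ ℝ^d, where D²f is the Hessian matrix of f. Let ψ : [0,T] × ℝ^d → ℝ be C^∞-smooth, ℤ^d-periodic in the space variable, and satisfy the unforced viscous Hamilton–Jacobi equation ∂_t ψ + f(∇ψ) − ν·Δψ = 0 on [0,T] × ℝ^d. Then for every t ∈ (0,T], every x ∈ ℝ^d and every unit vector e ∈ ℝ^d, the second directional derivative satisfies (e·∇)²ψ(t,x) ≤ 1/(σ·t). -/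
open Set Filter Topology
namespace KP

variable {d : ℕ} {T : ℝ}

noncomputable def D (S : Set (ℝ × (Fin d → ℝ))) (g : ℝ × (Fin d → ℝ) → ℝ)
    (a : ℝ × (Fin d → ℝ)) : ℝ × (Fin d → ℝ) → ℝ :=
  fun p => fderivWithin ℝ g S p a

def Sset (d : ℕ) (T : ℝ) : Set (ℝ × (Fin d → ℝ)) :=
  (Set.Icc (0:ℝ) T) ×ˢ (Set.univ : Set (Fin d → ℝ))

lemma hSud (hT : 0 < T) : UniqueDiffOn ℝ (Sset d T) :=
  (uniqueDiffOn_Icc hT).prod uniqueDiffOn_univ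

lemma hScl (hT : 0 < T) : Sset d T ⊆ closure (interior (Sset d T)) := by
  rw [Sset, interior_prod_eq, closure_prod_eq, interior_Icc, interior_univ, closure_univ,
    closure_Ioo hT.ne]

lemma Dsmooth (hT : 0 < T) {g : ℝ × (Fin d → ℝ) → ℝ}
    (hg : ContDiffOn ℝ (⊤ : ℕ∞) g (Sset d T)) (a : ℝ × (Fin d → ℝ)) :
    ContDiffOn ℝ (⊤ : ℕ∞) (D (Sset d T) g a) (Sset d T) :=
  (hg.fderivWithin (hSud hT) (le_of_eq ENat.coe_top_add_one)).clm_apply contDiffOn_const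

lemma DdiffOn (hT : 0 < T) {g : ℝ × (Fin d → ℝ) → ℝ}
    (hg : ContDiffOn ℝ (⊤ : ℕ∞) g (Sset d T)) (a : ℝ × (Fin d → ℝ)) :
    DifferentiableOn ℝ (D (Sset d T) g a) (Sset d T) :=
  (Dsmooth hT hg a).differentiableOn ((zero_lt_one.trans_le (by exact_mod_cast (le_top : (1:ℕ∞) ≤ ⊤))).ne')

lemma Dcomm (hT : 0 < T) {g : ℝ × (Fin d → ℝ) → ℝ}
    (hg : ContDiffOn ℝ (⊤ : ℕ∞) g (Sset d T)) {p : ℝ × (Fin d → ℝ)} (hp : p ∈ Sset d T)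
    (a b : ℝ × (Fin d → ℝ)) :
    D (Sset d T) (D (Sset d T) g a) b p = D (Sset d T) (D (Sset d T) g b) a p := by
  set S := Sset d T with hSdef
  have hdiff : DifferentiableWithinAt ℝ (fderivWithin ℝ g S) S p :=
    ((hg.fderivWithin (hSud hT) (le_of_eq ENat.coe_top_add_one)).differentiableOn
      ((zero_lt_one.trans_le (by exact_mod_cast (le_top : (1:ℕ∞) ≤ ⊤))).ne')) p hp
  have key : ∀ (c b' : ℝ × (Fin d → ℝ)),
      fderivWithin ℝ (fun q => fderivWithin ℝ g S q c) S p b'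
        = fderivWithin ℝ (fderivWithin ℝ g S) S p b' c := by
    intro c b'
    have h : HasFDerivWithinAt (fun q => fderivWithin ℝ g S q c)
        ((fderivWithin ℝ (fderivWithin ℝ g S) S p).flip c) S p := by
      have := hdiff.hasFDerivWithinAt.clm_apply (hasFDerivWithinAt_const c p S)
      simpa using this
    rw [h.fderivWithin (hSud hT p hp)]
    simp [ContinuousLinearMap.flip_apply]
  have e1 : D S (D S g a) b p = fderivWithin ℝ (fun q => fderivWithin ℝ g S q a) S p b := rfl
  have e2 : D S (D S g b) a p = fderivWithin ℝ (fun q => fderivWithin ℝ g S q b) S p a := rfl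
  rw [e1, e2, key a b, key b a]
  exact ((hg p hp).isSymmSndFDerivWithinAt
    (by simp only [minSmoothness_of_isRCLikeNormedField]; exact_mod_cast ENat.natCast_le_of_coe_top_le_withTop le_rfl 2)
    (hSud hT) (hScl hT hp) hp).eq b a


lemma mem_S {t : ℝ} (ht : t ∈ Set.Icc (0:ℝ) T) (x : Fin d → ℝ) : (t, x) ∈ Sset d T :=
  ⟨ht, mem_univ x⟩

lemma slice_hasFDerivAt {g : ℝ × (Fin d → ℝ) → ℝ} (hg : DifferentiableOn ℝ g (Sset d T))
    {t : ℝ} (ht : t ∈ Set.Icc (0:ℝ) T) (x : Fin d → ℝ) :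
    HasFDerivAt (fun z => g (t, z))
      ((fderivWithin ℝ g (Sset d T) (t, x)).comp
        ((0 : (Fin d → ℝ) →L[ℝ] ℝ).prod (ContinuousLinearMap.id ℝ (Fin d → ℝ)))) x := by
  have hι : HasFDerivAt (fun z : Fin d → ℝ => ((t : ℝ), z))
      ((0 : (Fin d → ℝ) →L[ℝ] ℝ).prod (ContinuousLinearMap.id ℝ (Fin d → ℝ))) x :=
    (hasFDerivAt_const t x).prodMk (hasFDerivAt_id x)
  have hmaps : MapsTo (fun z : Fin d → ℝ => ((t:ℝ), z)) univ (Sset d T) :=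
    fun z _ => ⟨ht, mem_univ z⟩
  have hcomp := HasFDerivWithinAt.comp x ((hg _ (mem_S ht x)).hasFDerivWithinAt)
    hι.hasFDerivWithinAt hmaps
  rw [← hasFDerivWithinAt_univ]
  exact hcomp

lemma slice_fderiv {g : ℝ × (Fin d → ℝ) → ℝ} (hg : DifferentiableOn ℝ g (Sset d T))
    {t : ℝ} (ht : t ∈ Set.Icc (0:ℝ) T) (x : Fin d → ℝ) (v : Fin d → ℝ) :
    fderiv ℝ (fun z => g (t, z)) x v = fderivWithin ℝ g (Sset d T) (t, x) ((0:ℝ), v) := by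
  rw [(slice_hasFDerivAt hg ht x).fderiv]
  simp

lemma tslice_hasDerivWithinAt {g : ℝ × (Fin d → ℝ) → ℝ} (hg : DifferentiableOn ℝ g (Sset d T))
    {t : ℝ} (ht : t ∈ Set.Icc (0:ℝ) T) (x : Fin d → ℝ) :
    HasDerivWithinAt (fun s => g (s, x))
      (fderivWithin ℝ g (Sset d T) (t, x) ((1:ℝ), (0 : Fin d → ℝ))) (Set.Icc 0 T) t := by
  have hι : HasFDerivWithinAt (fun s : ℝ => (s, x))
      ((ContinuousLinearMap.id ℝ ℝ).prod (0 : ℝ →L[ℝ] (Fin d → ℝ))) (Set.Icc (0:ℝ) T) t :=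
    ((hasFDerivAt_id t).prodMk (hasFDerivAt_const x t)).hasFDerivWithinAt
  have hcomp := HasFDerivWithinAt.comp t ((hg _ (mem_S ht x)).hasFDerivWithinAt) hι
    (fun s hs => mem_S hs x)
  have h2 := hcomp.hasDerivWithinAt
  exact h2

lemma D_periodic (hT : 0 < T) {g : ℝ × (Fin d → ℝ) → ℝ}
    (hg : DifferentiableOn ℝ g (Sset d T)) (c : Fin d → ℝ)
    (hgp : ∀ p ∈ Sset d T, g (p.1, p.2 + c) = g p) (a : ℝ × (Fin d → ℝ)) :
    ∀ p ∈ Sset d T, D (Sset d T) g a (p.1, p.2 + c) = D (Sset d T) g a p := by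
  intro p hp
  have hq : (p.1, p.2 + c) ∈ Sset d T := ⟨hp.1, mem_univ _⟩
  set L := fderivWithin ℝ g (Sset d T) (p.1, p.2 + c) with hL
  have hA : HasFDerivAt (fun r : ℝ × (Fin d → ℝ) => (r.1, r.2 + c))
      (ContinuousLinearMap.id ℝ (ℝ × (Fin d → ℝ))) p := by
    have he : (fun r : ℝ × (Fin d → ℝ) => (r.1, r.2 + c)) = fun r => r + ((0:ℝ), c) := by
      funext r
      simp [Prod.ext_iff]
    rw [he]
    simpa using (hasFDerivAt_id p).add_const ((0:ℝ), c)
  have hmaps : MapsTo (fun r : ℝ × (Fin d → ℝ) => (r.1, r.2 + c)) (Sset d T) (Sset d T) :=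
    fun r hr => ⟨hr.1, mem_univ _⟩
  have hcomp := HasFDerivWithinAt.comp p ((hg _ hq).hasFDerivWithinAt)
    (hA.hasFDerivWithinAt) hmaps
  have hcongr : HasFDerivWithinAt g (L.comp (ContinuousLinearMap.id ℝ (ℝ × (Fin d → ℝ))))
      (Sset d T) p :=
    hcomp.congr (fun r hr => (hgp r hr).symm) ((hgp p hp).symm)
  have hfd := hcongr.fderivWithin (hSud hT p hp)
  show fderivWithin ℝ g (Sset d T) (p.1, p.2 + c) a = fderivWithin ℝ g (Sset d T) p a
  rw [hfd]
  simp
  rfl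


lemma deriv_nonneg_right {φ : ℝ → ℝ} {t₀ L : ℝ} (ht₀ : 0 < t₀)
    (hφ : HasDerivWithinAt φ L (Set.Icc 0 t₀) t₀) (hmax : ∀ s ∈ Set.Icc (0:ℝ) t₀, φ s ≤ φ t₀) :
    0 ≤ L := by
  rw [hasDerivWithinAt_iff_tendsto_slope] at hφ
  have hsub : Set.Ico (0:ℝ) t₀ ⊆ Set.Icc 0 t₀ \ {t₀} := fun s hs =>
    ⟨⟨hs.1, hs.2.le⟩, ne_of_lt hs.2⟩
  have hne : (𝓝[Set.Icc 0 t₀ \ {t₀}] t₀).NeBot := by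
    have h1 : t₀ ∈ closure (Set.Ico (0:ℝ) t₀) := by
      rw [closure_Ico ht₀.ne]
      exact ⟨ht₀.le, le_refl _⟩
    have h2 : (𝓝[Set.Ico (0:ℝ) t₀] t₀).NeBot := mem_closure_iff_nhdsWithin_neBot.1 h1
    exact h2.mono (nhdsWithin_mono _ hsub)
  refine ge_of_tendsto hφ ?_
  refine eventually_nhdsWithin_of_forall (fun s hs => ?_)
  have hslt : s < t₀ := lt_of_le_of_ne hs.1.2 (by simpa using hs.2)
  have heq : slope φ t₀ s = (φ s - φ t₀) / (s - t₀) := slope_def_field φ t₀ s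
  rw [heq]
  exact div_nonneg_of_nonpos (by linarith [hmax s hs.1]) (by linarith)

lemma second_deriv_test {h h1 : ℝ → ℝ} (hd1 : ∀ s, HasDerivAt h (h1 s) s) {c : ℝ}
    (hd2 : HasDerivAt h1 c 0) (h10 : h1 0 = 0) (hmax : ∀ s, h s ≤ h 0) : c ≤ 0 := by
  by_contra hc
  push_neg at hc
  rw [hasDerivAt_iff_tendsto_slope] at hd2
  have htt : Tendsto (slope h1 0) (𝓝[>] (0:ℝ)) (𝓝 c) :=
    hd2.mono_left (nhdsWithin_mono _ (fun s hs => ne_of_gt hs))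
  have hev : ∀ᶠ s in 𝓝[>] (0:ℝ), 0 < slope h1 0 s := htt.eventually (eventually_gt_nhds hc)
  obtain ⟨u, hu, hsubu⟩ := mem_nhdsGT_iff_exists_Ioo_subset.1 hev
  have hu0 : (0:ℝ) < u := hu
  have hpos : ∀ s ∈ Set.Ioo (0:ℝ) u, 0 < h1 s := by
    intro s hs
    have hsl : 0 < slope h1 0 s := hsubu hs
    have : slope h1 0 s = h1 s / s := by
      rw [slope_def_field, h10]
      ring
    rw [this] at hsl
    have := mul_pos hsl hs.1
    rwa [div_mul_cancel₀ _ (ne_of_gt hs.1)] at this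
  have hmono : StrictMonoOn h (Set.Icc 0 (u/2)) := by
    apply strictMonoOn_of_deriv_pos (convex_Icc _ _)
    · exact fun s _ => (hd1 s).continuousAt.continuousWithinAt
    · intro s hs
      rw [interior_Icc] at hs
      rw [(hd1 s).deriv]
      exact hpos s ⟨hs.1, lt_trans hs.2 (by linarith)⟩
  have h02 : (0:ℝ) ∈ Set.Icc (0:ℝ) (u/2) := ⟨le_refl _, by linarith⟩
  have hu2 : u/2 ∈ Set.Icc (0:ℝ) (u/2) := ⟨by linarith, le_refl _⟩
  have := hmono h02 hu2 (by linarith)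
  linarith [hmax (u/2)]


lemma one_le : ((⊤:ℕ∞) : WithTop ℕ∞) ≠ 0 := by
  exact (zero_lt_one.trans_le (by exact_mod_cast (le_top : (1:ℕ∞) ≤ ⊤))).ne'

lemma top_add_one_le : ((⊤:ℕ∞) : WithTop ℕ∞) + 1 ≤ ((⊤:ℕ∞) : WithTop ℕ∞) :=
  le_of_eq ENat.coe_top_add_one

lemma hess_apply {d : ℕ} {f : (Fin d → ℝ) → ℝ} (hf : ContDiff ℝ (⊤:ℕ∞) f)
    (x v : Fin d → ℝ) :
    fderiv ℝ (fun y => fderiv ℝ f y v) x v = fderiv ℝ (fderiv ℝ f) x v v := by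
  have hdiff : DifferentiableAt ℝ (fderiv ℝ f) x :=
    ((hf.fderiv_right top_add_one_le).differentiable one_le) x
  have h : HasFDerivAt (fun y => fderiv ℝ f y v)
      ((fderiv ℝ (fderiv ℝ f) x).flip v) x := by
    have := hdiff.hasFDerivAt.clm_apply (hasFDerivAt_const v x)
    simpa using this
  rw [h.fderiv]
  simp

end KP

open Set Filter Topology

set_option maxHeartbeats 2000000 in
/-- Kruzhkov-type maximum principle: if `f` is `C^∞`, strongly convex with constant `σ > 0`,
and `ψ` is a smooth space-periodic solution of `∂_t ψ + f(∇ψ) − ν·Δψ = 0` on `[0,T] × ℝ^d`,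
then for all `t ∈ (0,T]`, `x` and unit vectors `e`, `(e·∇)²ψ(t,x) ≤ 1/(σ·t)`. -/
theorem stmt_8 (d : ℕ) (σ ν T : ℝ) (hσ : 0 < σ) (hν : 0 < ν) (hT : 0 < T)
    (f : (Fin d → ℝ) → ℝ) (hf : ContDiff ℝ (⊤ : ℕ∞) f)
    (hconv : ∀ x v : Fin d → ℝ,
      σ * ∑ i, (v i) ^ 2 ≤ fderiv ℝ (fun y => fderiv ℝ f y v) x v)
    (ψ : ℝ × (Fin d → ℝ) → ℝ)
    (hψ : ContDiffOn ℝ (⊤ : ℕ∞) ψ (Set.Icc 0 T ×ˢ (Set.univ : Set (Fin d → ℝ))))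
    (hper : ∀ t ∈ Set.Icc (0 : ℝ) T, ∀ (x : Fin d → ℝ) (n : Fin d → ℤ),
      ψ (t, x + fun i => (n i : ℝ)) = ψ (t, x))
    (hpde : ∀ t ∈ Set.Icc (0 : ℝ) T, ∀ x : Fin d → ℝ,
      derivWithin (fun s => ψ (s, x)) (Set.Icc 0 T) t
        + f (fun i => fderiv ℝ (fun y => ψ (t, y)) x (Pi.single i 1))
        - ν * ∑ i, fderiv ℝ (fun y => fderiv ℝ (fun z => ψ (t, z)) y (Pi.single i 1)) x
            (Pi.single i 1)
      = 0) :
    ∀ t ∈ Set.Ioc (0 : ℝ) T, ∀ x : Fin d → ℝ, ∀ e : Fin d → ℝ,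
      (∑ i, (e i) ^ 2 = 1) →
      fderiv ℝ (fun y => fderiv ℝ (fun z => ψ (t, z)) y e) x e ≤ 1 / (σ * t) := by
  classical
  intro t ht x e he
  have hψ' : ContDiffOn ℝ (⊤:ℕ∞) ψ (KP.Sset d T) := hψ.of_le (by simp)
  have hf' : ContDiff ℝ (⊤:ℕ∞) f := hf.of_le (by simp)
  set S := KP.Sset d T with hSdef
  have hψd : DifferentiableOn ℝ ψ S := hψ'.differentiableOn KP.one_le
  set w : ℝ × (Fin d → ℝ) := ((0:ℝ), e) with hw
  set τ : ℝ × (Fin d → ℝ) := ((1:ℝ), (0 : Fin d → ℝ)) with hτ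
  set bb : Fin d → ℝ × (Fin d → ℝ) := fun i => ((0:ℝ), Pi.single i 1) with hbb
  have hDw : ContDiffOn ℝ (⊤:ℕ∞) (KP.D S ψ w) S := KP.Dsmooth hT hψ' w
  set u : ℝ × (Fin d → ℝ) → ℝ := KP.D S (KP.D S ψ w) w with hu
  have huC : ContDiffOn ℝ (⊤:ℕ∞) u S := KP.Dsmooth hT hDw w
  have hud : DifferentiableOn ℝ u S := huC.differentiableOn KP.one_le
  have htIcc : t ∈ Set.Icc (0:ℝ) T := ⟨ht.1.le, ht.2⟩
  -- Step 1: bridge the statement's second derivative with `u`.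
  have hbridge : ∀ t' ∈ Set.Icc (0:ℝ) T, ∀ x' : Fin d → ℝ,
      fderiv ℝ (fun y => fderiv ℝ (fun z => ψ (t', z)) y e) x' e = u (t', x') := by
    intro t' ht' x'
    have hinner : (fun y => fderiv ℝ (fun z => ψ (t', z)) y e)
        = fun y => KP.D S ψ w (t', y) :=
      funext fun y => KP.slice_fderiv hψd ht' y e
    rw [hinner]
    exact KP.slice_fderiv (g := KP.D S ψ w) (KP.DdiffOn hT hψ' w) ht' x' e
  rw [hbridge t htIcc x]
  -- Step 2: periodicity of u
  have hperu : ∀ p ∈ S, ∀ n : Fin d → ℤ, u (p.1, p.2 + fun i => (n i:ℝ)) = u p := by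
    intro p hp n
    have h0 : ∀ q ∈ S, ψ (q.1, q.2 + fun i => (n i:ℝ)) = ψ q := by
      rintro ⟨t', x'⟩ hq
      exact hper t' hq.1 x' n
    have h1 : ∀ q ∈ S, KP.D S ψ w (q.1, q.2 + fun i => (n i:ℝ)) = KP.D S ψ w q :=
      KP.D_periodic hT hψd _ h0 w
    exact KP.D_periodic hT (hDw.differentiableOn KP.one_le) _ h1 w p hp
  -- Step 3: global maximum of p ↦ p.1 * u p over S
  obtain ⟨t₀, x₀, hp₀S, hMall⟩ : ∃ t₀ : ℝ, ∃ x₀ : Fin d → ℝ, (t₀, x₀) ∈ S ∧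
      ∀ p ∈ S, p.1 * u p ≤ t₀ * u (t₀, x₀) := by
    have hK : IsCompact ((Set.Icc (0:ℝ) T) ×ˢ (Set.Icc (0:Fin d → ℝ) 1)) :=
      isCompact_Icc.prod isCompact_Icc
    have hKS : ((Set.Icc (0:ℝ) T) ×ˢ (Set.Icc (0:Fin d → ℝ) 1)) ⊆ S :=
      fun p hp => ⟨hp.1, mem_univ _⟩
    have hKne : ((Set.Icc (0:ℝ) T) ×ˢ (Set.Icc (0:Fin d → ℝ) 1)).Nonempty :=
      ⟨((0:ℝ), (0:Fin d → ℝ)), ⟨⟨le_refl _, hT.le⟩, ⟨le_refl _, zero_le_one⟩⟩⟩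
    have hcont : ContinuousOn (fun p : ℝ × (Fin d → ℝ) => p.1 * u p)
        ((Set.Icc (0:ℝ) T) ×ˢ (Set.Icc (0:Fin d → ℝ) 1)) :=
      continuous_fst.continuousOn.mul (hud.continuousOn.mono hKS)
    obtain ⟨p₀, hp₀K, hp₀max⟩ := hK.exists_isMaxOn hKne hcont
    refine ⟨p₀.1, p₀.2, hKS (by simpa using hp₀K), ?_⟩
    rintro ⟨tt, xx⟩ hp
    have hxeq : xx = (fun i => Int.fract (xx i)) + fun i => ((⌊xx i⌋ : ℤ) : ℝ) := by
      funext i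
      simp only [Pi.add_apply, Int.fract]
      ring
    have hx'K : (tt, (fun i => Int.fract (xx i))) ∈
        (Set.Icc (0:ℝ) T) ×ˢ (Set.Icc (0:Fin d → ℝ) 1) :=
      ⟨hp.1, ⟨fun i => Int.fract_nonneg _, fun i => (Int.fract_lt_one _).le⟩⟩
    have hper' := hperu (tt, (fun i => Int.fract (xx i))) (hKS hx'K) (fun i => ⌊xx i⌋)
    have huu : u (tt, xx) = u (tt, (fun i => Int.fract (xx i))) := by
      conv_lhs => rw [hxeq]
      exact hper'
    have hfin := hp₀max hx'K
    show tt * u (tt, xx) ≤ _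
    rw [huu]
    exact hfin
  -- Step 4: key claim M ≤ 1/σ
  have hMle : t₀ * u (t₀, x₀) ≤ 1/σ := by
    have ht₀Icc : t₀ ∈ Set.Icc (0:ℝ) T := hp₀S.1
    rcases le_or_gt (u (t₀, x₀)) 0 with hu0 | hu0
    · exact le_trans (mul_nonpos_of_nonneg_of_nonpos ht₀Icc.1 hu0) (by positivity)
    rcases eq_or_lt_of_le ht₀Icc.1 with ht₀ | ht₀pos
    · rw [← ht₀]
      simpa using (by positivity : (0:ℝ) ≤ 1/σ)
    -- main case : t₀ > 0, u(t₀,x₀) > 0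
    have hp₀ : ((t₀ : ℝ), x₀) ∈ S := hp₀S
    have hUD := KP.hSud (d := d) hT
    have hxmax : ∀ y, u (t₀, y) ≤ u (t₀, x₀) := by
      intro y
      have h := hMall (t₀, y) ⟨ht₀Icc, mem_univ _⟩
      exact le_of_mul_le_mul_left h ht₀pos
    have hgrad : ∀ a : Fin d → ℝ, fderivWithin ℝ u S (t₀, x₀) ((0:ℝ), a) = 0 := by
      intro a
      have hlm : IsLocalMax (fun y => u (t₀, y)) x₀ := Filter.Eventually.of_forall hxmax
      have h0 := hlm.fderiv_eq_zero
      have h1 := KP.slice_fderiv (g := u) hud ht₀Icc x₀ a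
      rw [h0] at h1
      simpa using h1.symm
    have htime : 0 ≤ u (t₀, x₀) + t₀ * fderivWithin ℝ u S (t₀, x₀) τ := by
      have hsl := KP.tslice_hasDerivWithinAt (g := u) hud ht₀Icc x₀
      have hφ := (hasDerivWithinAt_id t₀ (Set.Icc (0:ℝ) T)).mul hsl
      have hφ' := hφ.mono (Set.Icc_subset_Icc le_rfl ht₀Icc.2)
      have hkey := KP.deriv_nonneg_right ht₀pos hφ' ?_
      · simpa using hkey
      · intro s hs
        have := hMall (s, x₀) ⟨⟨hs.1, le_trans hs.2 ht₀Icc.2⟩, mem_univ _⟩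
        simpa using this
    have hlap : ∀ i : Fin d, fderivWithin ℝ (KP.D S u (bb i)) S (t₀, x₀) (bb i) ≤ 0 := by
      intro i
      have hDud : DifferentiableOn ℝ (KP.D S u (bb i)) S := KP.DdiffOn hT huC _
      have hline : ∀ s : ℝ, HasDerivAt (fun s' : ℝ => x₀ + s' • (Pi.single i 1 : Fin d → ℝ))
          ((Pi.single i 1 : Fin d → ℝ)) s := by
        intro s
        simpa using ((hasDerivAt_id s).smul_const ((Pi.single i 1 : Fin d → ℝ))).const_add x₀
      have hx00 : x₀ + (0:ℝ) • (Pi.single i 1 : Fin d → ℝ) = x₀ := by simp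
      have hd1 : ∀ s : ℝ, HasDerivAt (fun s' : ℝ => u (t₀, x₀ + s' • (Pi.single i 1 : Fin d → ℝ)))
          (KP.D S u (bb i) (t₀, x₀ + s • (Pi.single i 1 : Fin d → ℝ))) s := by
        intro s
        have hs1 := KP.slice_hasFDerivAt (g := u) hud ht₀Icc (x₀ + s • (Pi.single i 1 : Fin d → ℝ))
        have h2 := hs1.comp_hasDerivAt s (hline s)
        exact h2
      have hd2 : HasDerivAt (fun s : ℝ => KP.D S u (bb i) (t₀, x₀ + s • (Pi.single i 1 : Fin d → ℝ)))
          (fderivWithin ℝ (KP.D S u (bb i)) S (t₀, x₀) (bb i)) 0 := by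
        have hs1 := KP.slice_hasFDerivAt (g := KP.D S u (bb i)) hDud ht₀Icc
          (x₀ + (0:ℝ) • (Pi.single i 1 : Fin d → ℝ))
        have h2 := hs1.comp_hasDerivAt 0 (hline 0)
        rw [hx00] at h2
        exact h2
      refine KP.second_deriv_test hd1 hd2 ?_ ?_
      · rw [hx00]
        exact hgrad (Pi.single i 1)
      · intro s
        rw [hx00]
        exact hxmax _
    -- the PDE in `fderivWithin` form
    set Gfun : (ℝ × (Fin d → ℝ)) → (Fin d → ℝ) :=
      fun p i => fderivWithin ℝ ψ S p (bb i) with hGfun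
    have hΦ : ∀ p ∈ S, fderivWithin ℝ ψ S p τ + f (Gfun p)
        - ν * ∑ i, fderivWithin ℝ (KP.D S ψ (bb i)) S p (bb i) = 0 := by
      rintro ⟨t', x'⟩ hp
      have e1 : derivWithin (fun s => ψ (s, x')) (Set.Icc 0 T) t'
          = fderivWithin ℝ ψ S (t', x') τ :=
        (KP.tslice_hasDerivWithinAt hψd hp.1 x').derivWithin (uniqueDiffOn_Icc hT t' hp.1)
      have e2 : (fun i => fderiv ℝ (fun y => ψ (t', y)) x' (Pi.single i 1)) = Gfun (t', x') :=
        funext fun i => KP.slice_fderiv hψd hp.1 x' (Pi.single i 1)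
      have e3 : ∀ i : Fin d,
          fderiv ℝ (fun y => fderiv ℝ (fun z => ψ (t', z)) y (Pi.single i 1)) x' (Pi.single i 1)
          = fderivWithin ℝ (KP.D S ψ (bb i)) S (t', x') (bb i) := by
        intro i
        have hi : (fun y => fderiv ℝ (fun z => ψ (t', z)) y (Pi.single i 1))
            = fun y => KP.D S ψ (bb i) (t', y) :=
          funext fun y => KP.slice_fderiv hψd hp.1 y (Pi.single i 1)
        rw [hi]
        exact KP.slice_fderiv (g := KP.D S ψ (bb i)) (KP.DdiffOn hT hψ' _) hp.1 x' (Pi.single i 1)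
      have h := hpde t' hp.1 x'
      rw [e1, e2] at h
      have hsum : (∑ i, fderiv ℝ (fun y => fderiv ℝ (fun z => ψ (t', z)) y (Pi.single i 1)) x'
            (Pi.single i 1))
          = ∑ i, fderivWithin ℝ (KP.D S ψ (bb i)) S (t', x') (bb i) :=
        Finset.sum_congr rfl fun i _ => e3 i
      rw [hsum] at h
      exact h
    set Vfun : (ℝ × (Fin d → ℝ)) → (Fin d → ℝ) :=
      fun p j => fderivWithin ℝ (KP.D S ψ (bb j)) S p w with hVfun
    have hGd : ∀ p ∈ S, HasFDerivWithinAt Gfun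
        (ContinuousLinearMap.pi (fun j => fderivWithin ℝ (KP.D S ψ (bb j)) S p)) S p := by
      intro p hp
      exact hasFDerivWithinAt_pi.2
        (fun j => ((KP.DdiffOn hT hψ' (bb j)) p hp).hasFDerivWithinAt)
    -- the PDE differentiated once in direction w
    have hA : ∀ p ∈ S,
        fderivWithin ℝ (KP.D S ψ τ) S p w + fderiv ℝ f (Gfun p) (Vfun p)
          - ν * ∑ i, fderivWithin ℝ (KP.D S (KP.D S ψ (bb i)) (bb i)) S p w = 0 := by
      intro p hp
      have hzero : fderivWithin ℝ (fun q => fderivWithin ℝ ψ S q τ + f (Gfun q)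
          - ν * ∑ i, fderivWithin ℝ (KP.D S ψ (bb i)) S q (bb i)) S p = 0 := by
        rw [fderivWithin_congr (fun q hq => hΦ q hq) (hΦ p hp)]
        exact fderivWithin_const_apply 0
      have h1 : HasFDerivWithinAt (fun q => fderivWithin ℝ ψ S q τ)
          (fderivWithin ℝ (KP.D S ψ τ) S p) S p :=
        ((KP.DdiffOn hT hψ' τ) p hp).hasFDerivWithinAt
      have h2 : HasFDerivWithinAt (fun q => f (Gfun q))
          ((fderiv ℝ f (Gfun p)).comp (ContinuousLinearMap.pi
            (fun j => fderivWithin ℝ (KP.D S ψ (bb j)) S p))) S p :=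
        ((hf'.differentiable KP.one_le (Gfun p)).hasFDerivAt).comp_hasFDerivWithinAt p (hGd p hp)
      have h3 : HasFDerivWithinAt
          (fun q => ∑ i, fderivWithin ℝ (KP.D S ψ (bb i)) S q (bb i))
          (∑ i, fderivWithin ℝ (KP.D S (KP.D S ψ (bb i)) (bb i)) S p) S p :=
        HasFDerivWithinAt.fun_sum (fun i _ =>
          ((KP.DdiffOn hT (KP.Dsmooth hT hψ' (bb i)) (bb i)) p hp).hasFDerivWithinAt)
      have h4 := (h1.add h2).sub (h3.const_mul ν)
      have h5 := h4.fderivWithin (hUD p hp)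
      have hE0 : fderivWithin ℝ (KP.D S ψ τ) S p
          + (fderiv ℝ f (Gfun p)).comp (ContinuousLinearMap.pi
            (fun j => fderivWithin ℝ (KP.D S ψ (bb j)) S p))
          - ν • (∑ i, fderivWithin ℝ (KP.D S (KP.D S ψ (bb i)) (bb i)) S p) = 0 := by
        rw [← h5]
        exact hzero
      have h9 := congrArg (fun L : (ℝ × (Fin d → ℝ)) →L[ℝ] ℝ => L w) hE0
      simp only [ContinuousLinearMap.add_apply, ContinuousLinearMap.sub_apply,
        ContinuousLinearMap.comp_apply, ContinuousLinearMap.smul_apply,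
        ContinuousLinearMap.sum_apply, ContinuousLinearMap.zero_apply, smul_eq_mul] at h9
      have hpi : (ContinuousLinearMap.pi
          (fun j => fderivWithin ℝ (KP.D S ψ (bb j)) S p)) w = Vfun p := rfl
      rw [hpi] at h9
      exact h9
    -- differentiate once more at (t₀,x₀), in direction w
    have hc2 : HasFDerivWithinAt (fun p => fderiv ℝ f (Gfun p))
        ((fderiv ℝ (fderiv ℝ f) (Gfun (t₀, x₀))).comp (ContinuousLinearMap.pi
          (fun j => fderivWithin ℝ (KP.D S ψ (bb j)) S (t₀, x₀)))) S (t₀, x₀) :=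
      (((hf'.fderiv_right KP.top_add_one_le).differentiable KP.one_le
        (Gfun (t₀, x₀))).hasFDerivAt).comp_hasFDerivWithinAt _ (hGd _ hp₀)
    have hVd : HasFDerivWithinAt Vfun
        (ContinuousLinearMap.pi (fun j =>
          fderivWithin ℝ (KP.D S (KP.D S ψ (bb j)) w) S (t₀, x₀))) S (t₀, x₀) :=
      hasFDerivWithinAt_pi.2 (fun j =>
        ((KP.DdiffOn hT (KP.Dsmooth hT hψ' (bb j)) w) _ hp₀).hasFDerivWithinAt)
    have hA1 : HasFDerivWithinAt (fun q => fderivWithin ℝ (KP.D S ψ τ) S q w)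
        (fderivWithin ℝ (KP.D S (KP.D S ψ τ) w) S (t₀, x₀)) S (t₀, x₀) :=
      ((KP.DdiffOn hT (KP.Dsmooth hT hψ' τ) w) _ hp₀).hasFDerivWithinAt
    have hA2 := hc2.clm_apply hVd
    have hA3 : HasFDerivWithinAt
        (fun q => ∑ i, fderivWithin ℝ (KP.D S (KP.D S ψ (bb i)) (bb i)) S q w)
        (∑ i, fderivWithin ℝ (KP.D S (KP.D S (KP.D S ψ (bb i)) (bb i)) w) S (t₀, x₀))
        S (t₀, x₀) :=
      HasFDerivWithinAt.fun_sum (fun i _ =>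
        ((KP.DdiffOn hT (KP.Dsmooth hT (KP.Dsmooth hT hψ' (bb i)) (bb i)) w) _ hp₀).hasFDerivWithinAt)
    have htot := (hA1.add hA2).sub (hA3.const_mul ν)
    have h5 := htot.fderivWithin (hUD _ hp₀)
    have hzero2 : fderivWithin ℝ (fun p => fderivWithin ℝ (KP.D S ψ τ) S p w
        + fderiv ℝ f (Gfun p) (Vfun p)
        - ν * ∑ i, fderivWithin ℝ (KP.D S (KP.D S ψ (bb i)) (bb i)) S p w) S (t₀, x₀) = 0 := by
      rw [fderivWithin_congr (fun q hq => hA q hq) (hA _ hp₀)]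
      exact fderivWithin_const_apply 0
    have hE0 : fderivWithin ℝ (KP.D S (KP.D S ψ τ) w) S (t₀, x₀)
        + (((fun p => fderiv ℝ f (Gfun p)) (t₀, x₀)).comp (ContinuousLinearMap.pi (fun j =>
            fderivWithin ℝ (KP.D S (KP.D S ψ (bb j)) w) S (t₀, x₀)))
          + ((fderiv ℝ (fderiv ℝ f) (Gfun (t₀, x₀))).comp (ContinuousLinearMap.pi
            (fun j => fderivWithin ℝ (KP.D S ψ (bb j)) S (t₀, x₀)))).flip (Vfun (t₀, x₀)))
        - ν • (∑ i, fderivWithin ℝ (KP.D S (KP.D S (KP.D S ψ (bb i)) (bb i)) w) S (t₀, x₀))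
        = 0 := by
      rw [← h5]
      exact hzero2
    have h9 := congrArg (fun L : (ℝ × (Fin d → ℝ)) →L[ℝ] ℝ => L w) hE0
    simp only [ContinuousLinearMap.add_apply, ContinuousLinearMap.sub_apply,
      ContinuousLinearMap.comp_apply, ContinuousLinearMap.smul_apply,
      ContinuousLinearMap.sum_apply, ContinuousLinearMap.zero_apply,
      ContinuousLinearMap.flip_apply, smul_eq_mul] at h9
    -- swap identities
    have E1 : fderivWithin ℝ (KP.D S (KP.D S ψ τ) w) S (t₀, x₀) w
        = fderivWithin ℝ u S (t₀, x₀) τ := by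
      have s1 : Set.EqOn (KP.D S (KP.D S ψ τ) w) (KP.D S (KP.D S ψ w) τ) S :=
        fun q hq => KP.Dcomm hT hψ' hq τ w
      rw [fderivWithin_congr s1 (s1 hp₀)]
      exact KP.Dcomm hT hDw hp₀ τ w
    have E2 : ∀ j : Fin d, fderivWithin ℝ (KP.D S (KP.D S ψ (bb j)) w) S (t₀, x₀) w = 0 := by
      intro j
      have s1 : Set.EqOn (KP.D S (KP.D S ψ (bb j)) w) (KP.D S (KP.D S ψ w) (bb j)) S :=
        fun q hq => KP.Dcomm hT hψ' hq (bb j) w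
      rw [fderivWithin_congr s1 (s1 hp₀)]
      have hsw : fderivWithin ℝ (KP.D S (KP.D S ψ w) (bb j)) S (t₀, x₀) w
          = fderivWithin ℝ u S (t₀, x₀) (bb j) := KP.Dcomm hT hDw hp₀ (bb j) w
      rw [hsw]
      exact hgrad (Pi.single j 1)
    have E3 : ∀ i : Fin d,
        fderivWithin ℝ (KP.D S (KP.D S (KP.D S ψ (bb i)) (bb i)) w) S (t₀, x₀) w
        = fderivWithin ℝ (KP.D S u (bb i)) S (t₀, x₀) (bb i) := by
      intro i
      have hg1 : ContDiffOn ℝ (⊤:ℕ∞) (KP.D S ψ (bb i)) S := KP.Dsmooth hT hψ' (bb i)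
      have s1 : Set.EqOn (KP.D S (KP.D S (KP.D S ψ (bb i)) (bb i)) w)
          (KP.D S (KP.D S (KP.D S ψ (bb i)) w) (bb i)) S :=
        fun q hq => KP.Dcomm hT hg1 hq (bb i) w
      rw [fderivWithin_congr s1 (s1 hp₀)]
      have s2 : Set.EqOn (KP.D S (KP.D S ψ (bb i)) w) (KP.D S (KP.D S ψ w) (bb i)) S :=
        fun q hq => KP.Dcomm hT hψ' hq (bb i) w
      have s2' : Set.EqOn (KP.D S (KP.D S (KP.D S ψ (bb i)) w) (bb i))
          (KP.D S (KP.D S (KP.D S ψ w) (bb i)) (bb i)) S := by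
        intro q hq
        show fderivWithin ℝ (KP.D S (KP.D S ψ (bb i)) w) S q (bb i)
          = fderivWithin ℝ (KP.D S (KP.D S ψ w) (bb i)) S q (bb i)
        rw [fderivWithin_congr s2 (s2 hq)]
      rw [fderivWithin_congr s2' (s2' hp₀)]
      have hk : ContDiffOn ℝ (⊤:ℕ∞) (KP.D S (KP.D S ψ w) (bb i)) S :=
        KP.Dsmooth hT hDw (bb i)
      have s3 : fderivWithin ℝ (KP.D S (KP.D S (KP.D S ψ w) (bb i)) (bb i)) S (t₀, x₀) w
          = fderivWithin ℝ (KP.D S (KP.D S (KP.D S ψ w) (bb i)) w) S (t₀, x₀) (bb i) :=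
        KP.Dcomm hT hk hp₀ (bb i) w
      rw [s3]
      have s4 : Set.EqOn (KP.D S (KP.D S (KP.D S ψ w) (bb i)) w) (KP.D S u (bb i)) S :=
        fun q hq => KP.Dcomm hT hDw hq (bb i) w
      rw [fderivWithin_congr s4 (s4 hp₀)]
    -- clean up h9
    have hpi1 : (ContinuousLinearMap.pi
        (fun j => fderivWithin ℝ (KP.D S (KP.D S ψ (bb j)) w) S (t₀, x₀))) w
        = fun j => fderivWithin ℝ (KP.D S (KP.D S ψ (bb j)) w) S (t₀, x₀) w := rfl
    have hpi2 : (ContinuousLinearMap.pi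
        (fun j => fderivWithin ℝ (KP.D S ψ (bb j)) S (t₀, x₀))) w = Vfun (t₀, x₀) := rfl
    rw [hpi1, hpi2] at h9
    have hvec0 : (fun j => fderivWithin ℝ (KP.D S (KP.D S ψ (bb j)) w) S (t₀, x₀) w)
        = (0 : Fin d → ℝ) := funext fun j => E2 j
    rw [hvec0, map_zero, E1] at h9
    have hsum3 : ∑ i, fderivWithin ℝ (KP.D S (KP.D S (KP.D S ψ (bb i)) (bb i)) w) S (t₀, x₀) w
        = ∑ i, fderivWithin ℝ (KP.D S u (bb i)) S (t₀, x₀) (bb i) :=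
      Finset.sum_congr rfl fun i _ => E3 i
    rw [hsum3] at h9
    -- Hessian lower bound
    have hHess : σ * ∑ j, (Vfun (t₀, x₀) j)^2
        ≤ (fderiv ℝ (fderiv ℝ f) (Gfun (t₀, x₀)) (Vfun (t₀, x₀))) (Vfun (t₀, x₀)) := by
      have h := hconv (Gfun (t₀, x₀)) (Vfun (t₀, x₀))
      rwa [KP.hess_apply hf'] at h
    -- Cauchy–Schwarz
    have hswapj : ∀ j, Vfun (t₀, x₀) j = fderivWithin ℝ (KP.D S ψ w) S (t₀, x₀) (bb j) :=
      fun j => KP.Dcomm hT hψ' hp₀ (bb j) w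
    have hwrep : w = ∑ j, e j • bb j := by
      rw [hw, hbb]
      refine Prod.ext ?_ ?_
      · rw [Prod.fst_sum]
        simp
      · rw [Prod.snd_sum]
        funext k
        rw [Finset.sum_apply]
        simp [Pi.single_apply]
    have hrep : u (t₀, x₀) = ∑ j, e j * Vfun (t₀, x₀) j := by
      calc u (t₀, x₀) = (fderivWithin ℝ (KP.D S ψ w) S (t₀, x₀)) (∑ j, e j • bb j) :=
            congrArg (fderivWithin ℝ (KP.D S ψ w) S (t₀, x₀)) hwrep
        _ = ∑ j, e j * Vfun (t₀, x₀) j := by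
            rw [map_sum]
            refine Finset.sum_congr rfl fun j _ => ?_
            rw [map_smul, smul_eq_mul, hswapj j]
    have hCS : (u (t₀, x₀))^2 ≤ ∑ j, (Vfun (t₀, x₀) j)^2 := by
      calc (u (t₀, x₀))^2 = (∑ j, e j * Vfun (t₀, x₀) j)^2 := by rw [hrep]
        _ ≤ (∑ j, (e j)^2) * (∑ j, (Vfun (t₀, x₀) j)^2) :=
            Finset.sum_mul_sq_le_sq_mul_sq _ _ _
        _ = ∑ j, (Vfun (t₀, x₀) j)^2 := by rw [he, one_mul]
    have hSig : ∑ i, fderivWithin ℝ (KP.D S u (bb i)) S (t₀, x₀) (bb i) ≤ 0 :=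
      Finset.sum_nonpos (fun i _ => hlap i)
    have hnuSig : ν * ∑ i, fderivWithin ℝ (KP.D S u (bb i)) S (t₀, x₀) (bb i) ≤ 0 :=
      mul_nonpos_of_nonneg_of_nonpos hν.le hSig
    have hHess2 : σ * (u (t₀, x₀))^2
        ≤ (fderiv ℝ (fderiv ℝ f) (Gfun (t₀, x₀)) (Vfun (t₀, x₀))) (Vfun (t₀, x₀)) :=
      le_trans (mul_le_mul_of_nonneg_left hCS hσ.le) hHess
    clear_value u S w τ bb Gfun Vfun
    have h10 : σ * (u (t₀, x₀))^2 ≤ -(fderivWithin ℝ u S (t₀, x₀) τ) := by linarith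
    have h11 : t₀ * (σ * (u (t₀, x₀))^2) ≤ t₀ * (-(fderivWithin ℝ u S (t₀, x₀) τ)) :=
      mul_le_mul_of_nonneg_left h10 ht₀pos.le
    have h13 : t₀ * (σ * (u (t₀, x₀))^2) ≤ u (t₀, x₀) := by nlinarith [htime]
    clear hA hA1 hA2 hA3 htot h5 hzero2 hE0 h9 hΦ hGd hc2 hVd E1 E2 E3 hpi1 hpi2
    clear hvec0 hsum3 hHess hswapj hwrep hrep hCS hSig hnuSig hHess2 h10 h11
    clear hgrad htime hlap hxmax hMall hbridge hperu hconv hpde hper hψ hψ' hψd hDw huC hud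
    rw [le_div_iff₀ hσ]
    nlinarith [h13, hu0]
  -- Step 5: conclude
  have h1 : t * u (t, x) ≤ t₀ * u (t₀, x₀) := hMall (t, x) ⟨htIcc, mem_univ x⟩
  have h2 : t * u (t, x) ≤ 1/σ := le_trans h1 hMle
  rw [le_div_iff₀ (mul_pos hσ ht.1)]
  have h3 : σ * (t * u (t,x)) ≤ σ * (1/σ) := mul_le_mul_of_nonneg_left h2 hσ.le
  rw [mul_one_div, div_self hσ.ne'] at h3
  nlinarith
end

section
/- Let g : ℝ → ℝ be a C¹ function which is 1-periodic and has zero mean, i.e. ∫₀¹ g(x) dx = 0. Then sup_{x ∈ ℝ} |g(x)| ≤ ∫₀¹ max(g'(x), 0) dx. -/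
/-!
On any interval of length one, `g` can rise by at most `P = ∫₀¹ max(g', 0)`, since the increment
is the integral of `g'` and the positive part of `g'` has the same integral over every period.
A zero-mean continuous function vanishes somewhere, so by periodicity every `x` has a zero of `g`
within distance one to its left and to its right; comparing `g x` with these zeros gives
`g x ≤ P` and `-g x ≤ P`.
-/

open Set Function intervalIntegral

theorem Function.Periodic.deriv {g : ℝ → ℝ} {T : ℝ} (h : Periodic g T) :
    Periodic (deriv g) T := fun x => by
  rw [← deriv_comp_add_const, show (fun y => g (y + T)) = g from funext h]

theorem sub_le_integral_max_deriv {g : ℝ → ℝ} (hg : ContDiff ℝ 1 g) {u v w : ℝ}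
    (huv : u ≤ v) (hvw : v ≤ w) : g v - g u ≤ ∫ x in u..w, max (deriv g x) 0 := by
  have hg' : Continuous (deriv g) := hg.continuous_deriv le_rfl
  have hpos : Continuous fun x => max (deriv g x) 0 := hg'.max continuous_const
  calc g v - g u = ∫ x in u..v, deriv g x :=
        (integral_deriv_eq_sub (fun x _ => hg.differentiable one_ne_zero x)
          (hg'.intervalIntegrable _ _)).symm
    _ ≤ ∫ x in u..v, max (deriv g x) 0 :=
        integral_mono_on huv (hg'.intervalIntegrable _ _) (hpos.intervalIntegrable _ _)
          fun x _ => le_max_left _ _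
    _ ≤ ∫ x in u..w, max (deriv g x) 0 :=
        integral_mono_interval le_rfl huv hvw
          (Filter.Eventually.of_forall fun x => le_max_right _ _) (hpos.intervalIntegrable _ _)

theorem sub_le_integral_max_deriv_of_periodic {g : ℝ → ℝ} {T : ℝ} (hg : ContDiff ℝ 1 g)
    (hper : Periodic g T) {u v : ℝ} (huv : u ≤ v) (hvT : v ≤ u + T) :
    g v - g u ≤ ∫ x in 0..T, max (deriv g x) 0 := by
  have hperiod : Periodic (fun x => max (deriv g x) 0) T := fun x => by
    simp only [hper.deriv x]
  simpa [hperiod.intervalIntegral_add_eq u 0] using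
    sub_le_integral_max_deriv hg huv hvT

/-- A `C¹`, `1`-periodic, zero-mean function `g : ℝ → ℝ` satisfies
`sup_x |g(x)| ≤ ∫₀¹ max(g'(x), 0) dx`. -/
theorem stmt_9 (g : ℝ → ℝ) (hg : ContDiff ℝ 1 g) (hper : ∀ x, g (x + 1) = g x)
    (hmean : ∫ x in (0:ℝ)..1, g x = 0) :
    (⨆ x : ℝ, |g x|) ≤ ∫ x in (0:ℝ)..1, max (deriv g x) 0 := by
  have hperiodic : Periodic g 1 := hper
  obtain ⟨c, -, hc⟩ : ∃ c ∈ uIoo (0:ℝ) 1, g c = 0 := by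
    simpa [MeasureTheory.setAverage_eq, ← integral_of_le zero_le_one, hmean] using
      exists_eq_interval_average zero_ne_one hg.continuous.continuousOn
  refine Real.iSup_le (fun x => abs_le.2 ⟨?_, ?_⟩)
    (integral_nonneg zero_le_one fun x _ => le_max_right _ _)
  · obtain ⟨z, ⟨hxz, hzx⟩, hgz⟩ := hperiodic.exists_mem_Ico one_pos c x
    linarith [sub_le_integral_max_deriv_of_periodic hg hperiodic hxz hzx.le]
  · obtain ⟨y, ⟨hxy, hyx1⟩, hgy⟩ := hperiodic.exists_mem_Ico one_pos c (x - 1)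
    have hyx : y ≤ x := by linarith
    linarith [sub_le_integral_max_deriv_of_periodic hg hperiodic hyx (by linarith : x ≤ y + 1)]
end

section
/- Let ψ : ℝ^d → ℝ be a C^∞-smooth ℤ^d-periodic function and let i ∈ {1, …, d}. Then sup_{x ∈ ℝ^d} |∂_i ψ(x)| ≤ sup_{x ∈ ℝ^d} max(∂_i∂_i ψ(x), 0). -/
open Set

/-- fderiv of a function invariant under translation by `c` is invariant too. -/
lemma fderiv_translate_invariant {d : ℕ} {f : (Fin d → ℝ) → ℝ}
    (hf : Differentiable ℝ f) (c : Fin d → ℝ) (hc : ∀ y, f (y + c) = f y)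
    (x : Fin d → ℝ) : fderiv ℝ f (x + c) = fderiv ℝ f x := by
  have h1 : HasFDerivAt (fun y => f (y + c)) (fderiv ℝ f (x + c)) x := by
    have := (hf (x + c)).hasFDerivAt.comp x ((hasFDerivAt_id x).add_const c)
    simpa [Function.comp_def] using this
  have h2 : (fun y => f (y + c)) = f := funext hc
  rw [h2] at h1
  exact (h1.fderiv).symm

/-- A continuous `ℤ^d`-periodic function on `ℝ^d` has bounded range. -/
lemma bddAbove_range_of_periodic {d : ℕ} {f : (Fin d → ℝ) → ℝ}
    (hf : Continuous f)
    (hper : ∀ (x : Fin d → ℝ) (n : Fin d → ℤ), f (x + fun j => (n j : ℝ)) = f x) :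
    BddAbove (Set.range f) := by
  obtain ⟨C, hC⟩ := (isCompact_Icc (a := (0 : Fin d → ℝ)) (b := 1)).exists_bound_of_continuousOn
    hf.continuousOn
  refine ⟨C, ?_⟩
  rintro _ ⟨x, rfl⟩
  set n : Fin d → ℤ := fun j => ⌊x j⌋ with hn
  set y : Fin d → ℝ := fun j => Int.fract (x j) with hy
  have hxy : x = y + fun j => (n j : ℝ) := by
    funext j
    show x j = Int.fract (x j) + (⌊x j⌋ : ℝ)
    rw [Int.fract]; ring
  have hmem : y ∈ Set.Icc (0 : Fin d → ℝ) 1 := by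
    constructor <;> intro j
    · exact (Int.fract_nonneg (x j))
    · exact le_of_lt (Int.fract_lt_one (x j))
  calc f x = f y := by rw [hxy, hper]
    _ ≤ |f y| := le_abs_self _
    _ ≤ C := by simpa [Real.norm_eq_abs] using hC y hmem

/-- For a `C^∞`-smooth `ℤ^d`-periodic `ψ : ℝ^d → ℝ` and any coordinate `i`,
`sup_x |∂_i ψ(x)| ≤ sup_x max(∂_i∂_i ψ(x), 0)`. -/
theorem stmt_10 (d : ℕ) (ψ : (Fin d → ℝ) → ℝ) (hψ : ContDiff ℝ (⊤ : ℕ∞) ψ)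
    (hper : ∀ (x : Fin d → ℝ) (n : Fin d → ℤ), ψ (x + fun i => (n i : ℝ)) = ψ x)
    (i : Fin d) :
    (⨆ x : Fin d → ℝ, |fderiv ℝ ψ x (Pi.single i 1)|) ≤
      ⨆ x : Fin d → ℝ,
        max (fderiv ℝ (fun y => fderiv ℝ ψ y (Pi.single i 1)) x (Pi.single i 1)) 0 := by
  set e : Fin d → ℝ := Pi.single i 1 with he
  set g : (Fin d → ℝ) → ℝ := fun y => fderiv ℝ ψ y e with hgdef
  set h : (Fin d → ℝ) → ℝ := fun y => fderiv ℝ g y e with hhdef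
  -- smoothness of g
  have hψd : Differentiable ℝ ψ := hψ.differentiable (by simp)
  have hg : ContDiff ℝ (⊤ : ℕ∞) g := by
    have h1 : ContDiff ℝ (⊤ : ℕ∞) (fderiv ℝ ψ) := hψ.fderiv_right (le_refl _)
    exact h1.clm_apply contDiff_const
  have hgd : Differentiable ℝ g := hg.differentiable (by simp)
  have hh : ContDiff ℝ (⊤ : ℕ∞) h := by
    have h1 : ContDiff ℝ (⊤ : ℕ∞) (fderiv ℝ g) := hg.fderiv_right (le_refl _)
    exact h1.clm_apply contDiff_const
  -- the integer vector corresponding to e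
  have hecast : (fun j => ((Pi.single i 1 : Fin d → ℤ) j : ℝ)) = e := by
    funext j
    by_cases hj : j = i <;> simp [he, Pi.single_apply, hj]
  -- periodicity of g and h
  have hgper : ∀ (x : Fin d → ℝ) (n : Fin d → ℤ), g (x + fun j => (n j : ℝ)) = g x := by
    intro x n
    simp only [hgdef]
    rw [fderiv_translate_invariant hψd _ (fun y => hper y n) x]
  have hhper : ∀ (x : Fin d → ℝ) (n : Fin d → ℤ), h (x + fun j => (n j : ℝ)) = h x := by
    intro x n
    simp only [hhdef]
    rw [fderiv_translate_invariant hgd _ (fun y => hgper y n) x]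
  -- boundedness of RHS family
  have hbddh : BddAbove (Set.range fun x => max (h x) 0) := by
    obtain ⟨C, hC⟩ := bddAbove_range_of_periodic hh.continuous hhper
    refine ⟨max C 0, ?_⟩
    rintro _ ⟨x, rfl⟩
    exact max_le_max (hC ⟨x, rfl⟩) le_rfl
  set M : ℝ := ⨆ x : Fin d → ℝ, max (h x) 0 with hM
  have hM0 : 0 ≤ M := le_trans (le_max_right (h 0) 0) (le_ciSup hbddh 0)
  have hhM : ∀ x, h x ≤ M := fun x =>
    le_trans (le_max_left _ _) (le_ciSup hbddh x)
  -- key pointwise estimate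
  have key : ∀ x : Fin d → ℝ, |g x| ≤ M := by
    intro x
    -- functions along the line
    set F : ℝ → ℝ := fun t => ψ (x + t • e) with hF
    set G : ℝ → ℝ := fun t => g (x + t • e) with hG
    have hline : ∀ t : ℝ, HasDerivAt (fun s : ℝ => x + s • e) e t := by
      intro t
      simpa using ((hasDerivAt_id t).smul_const e).const_add x
    have hF' : ∀ t, HasDerivAt F (G t) t := fun t =>
      (hψd (x + t • e)).hasFDerivAt.comp_hasDerivAt t (hline t)
    have hG' : ∀ t, HasDerivAt G (h (x + t • e)) t := fun t => by
      have := (hgd (x + t • e)).hasFDerivAt.comp_hasDerivAt t (hline t); exact this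
    have hGdiff : Differentiable ℝ G := fun t => (hG' t).differentiableAt
    -- F is 1-periodic
    have hFper : ∀ t : ℝ, F (t + 1) = F t := by
      intro t
      have : x + (t + 1) • e = (x + t • e) + fun j => (((Pi.single i 1 : Fin d → ℤ) j : ℝ)) := by
        rw [hecast]; funext j; simp [Pi.add_apply, add_smul, one_smul]; ring
      simp only [hF, this, hper]
    -- H t = M * t - G t is monotone
    have hH : Monotone (fun t => M * t - G t) := by
      apply monotone_of_deriv_nonneg
      · exact (differentiable_const M |>.mul differentiable_id).sub hGdiff
      · intro t
        have : HasDerivAt (fun t => M * t - G t) (M - h (x + t • e)) t := by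
          simpa [Pi.sub_def] using (((hasDerivAt_id t).const_mul M).sub (hG' t))
        rw [this.deriv]
        linarith [hhM (x + t • e)]
    have hGx : G 0 = g x := by simp [hG]
    rcases le_or_gt 0 (g x) with hsign | hsign
    · -- find s ∈ (-1,0) with G s = 0
      obtain ⟨s, hs, hGs⟩ := exists_hasDerivAt_eq_slope F G (by norm_num : (-1:ℝ) < 0)
        (fun t _ => (hF' t).continuousAt.continuousWithinAt)
        (fun t _ => hF' t)
      have hF0 : F 0 = F (-1) := by simpa using hFper (-1)
      rw [hF0] at hGs
      simp at hGs
      have := hH hs.2.le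
      simp only [mul_zero] at this
      have hG0 : G 0 ≤ M * (-s) := by rw [hGs] at this; linarith
      rw [abs_of_nonneg hsign, ← hGx]
      calc G 0 ≤ M * (-s) := hG0
        _ ≤ M * 1 := by nlinarith [hs.1, hs.2]
        _ = M := mul_one M
    · -- find s ∈ (0,1) with G s = 0
      obtain ⟨s, hs, hGs⟩ := exists_hasDerivAt_eq_slope F G (by norm_num : (0:ℝ) < 1)
        (fun t _ => (hF' t).continuousAt.continuousWithinAt)
        (fun t _ => hF' t)
      have hF1 : F 1 = F 0 := by simpa using hFper 0
      rw [hF1] at hGs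
      simp at hGs
      have := hH hs.1.le
      simp only [mul_zero] at this
      have hG0 : -G 0 ≤ M * s := by rw [hGs] at this; linarith
      rw [abs_of_neg hsign, ← hGx]
      calc -G 0 ≤ M * s := hG0
        _ ≤ M * 1 := by nlinarith [hs.1, hs.2]
        _ = M := mul_one M
  exact ciSup_le key
end

section
/- For all integers d ≥ 1, m ≥ 1 and every real p ∈ [1, ∞) there exist a finite set Π ⊂ ℤ^d of nonzero integer vectors and constants c > 0 and C > 0 such that for every C^∞-smooth ℤ^d-periodic function v : ℝ^d → ℝ: c · Σ_{|α| = m} ( ∫_{[0,1]^d} |∂^α v(x)|^p dx )^{1/p} ≤ Σ_{k ∈ Π} ( ∫_{[0,1]^d} |(k·∇)^m v(x)|^p dx )^{1/p} ≤ C · Σ_{|α| = m} ( ∫_{[0,1]^d} |∂^α v(x)|^p dx )^{1/p}. -/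
open MeasureTheory

section Symmetry

variable {E : Type*} [NormedAddCommGroup E] [NormedSpace ℝ E]

/-- Directional derivative operator. -/
noncomputable def dLine (u : E) (f : E → ℝ) : E → ℝ := fun y => fderiv ℝ f y u

lemma dLine_contDiff {f : E → ℝ} (hf : ContDiff ℝ (⊤ : ℕ∞) f) (u : E) :
    ContDiff ℝ (⊤ : ℕ∞) (dLine u f) :=
  (hf.fderiv_right (by simp)).clm_apply contDiff_const

lemma dLine_comm {f : E → ℝ} (hf : ContDiff ℝ (⊤ : ℕ∞) f) (a b : E) :
    dLine a (dLine b f) = dLine b (dLine a f) := by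
  funext x
  have hfd : ContDiff ℝ (⊤ : ℕ∞) (fderiv ℝ f) := hf.fderiv_right (by simp)
  have hd : ∀ y : E, DifferentiableAt ℝ (fderiv ℝ f) y := fun y =>
    (hfd.differentiable (by simp)).differentiableAt
  have key : ∀ u v : E, fderiv ℝ (fun y => fderiv ℝ f y v) x u
      = fderiv ℝ (fderiv ℝ f) x u v := by
    intro u v
    rw [fderiv_clm_apply (hd x) (differentiableAt_const v)]
    simp
  show fderiv ℝ (fun y => fderiv ℝ f y b) x a = fderiv ℝ (fun y => fderiv ℝ f y a) x b
  have hsymm := ((hf.contDiffAt (x := x)).isSymmSndFDerivAt (by rw [minSmoothness_of_isRCLikeNormedField]; exact WithTop.coe_le_coe.mpr (le_top : (2 : ℕ∞) ≤ ⊤))).eq a b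
  rw [key a b, key b a, hsymm]

lemma foldr_dLine_contDiff {f : E → ℝ} (hf : ContDiff ℝ (⊤ : ℕ∞) f) :
    ∀ l : List E, ContDiff ℝ (⊤ : ℕ∞) (l.foldr dLine f)
  | [] => hf
  | a :: l => dLine_contDiff (foldr_dLine_contDiff hf l) a

lemma foldr_dLine_perm {f : E → ℝ} (hf : ContDiff ℝ (⊤ : ℕ∞) f) {l l' : List E}
    (h : l.Perm l') : l.foldr dLine f = l'.foldr dLine f := by
  induction h with
  | nil => rfl
  | cons a h ih => simp only [List.foldr_cons, ih]
  | swap a b l => exact dLine_comm (foldr_dLine_contDiff hf l) b a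
  | trans h₁ h₂ ih₁ ih₂ => rw [ih₁, ih₂]

lemma iteratedFDeriv_eq_foldr :
    ∀ (m : ℕ) (f : E → ℝ), ContDiff ℝ (⊤ : ℕ∞) f → ∀ (x : E) (w : Fin m → E),
      iteratedFDeriv ℝ m f x w = (List.ofFn w).foldr dLine f x := by
  intro m
  induction m with
  | zero => intro f hf x w; simp
  | succ n ih =>
    intro f hf x w
    rw [iteratedFDeriv_succ_apply_right]
    have hfd : ContDiff ℝ (⊤ : ℕ∞) (fderiv ℝ f) := hf.fderiv_right (by simp)
    have hcomp := (ContinuousLinearMap.apply ℝ ℝ (w (Fin.last n))).iteratedFDeriv_comp_left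
        (hfd.contDiffAt (x := x)) (i := n) (by exact_mod_cast (le_top : (n : ℕ∞) ≤ ⊤))
    have h1 : iteratedFDeriv ℝ n (fderiv ℝ f) x (Fin.init w) (w (Fin.last n))
        = iteratedFDeriv ℝ n (dLine (w (Fin.last n)) f) x (Fin.init w) := by
      have : dLine (w (Fin.last n)) f
          = (ContinuousLinearMap.apply ℝ ℝ (w (Fin.last n))) ∘ (fderiv ℝ f) := rfl
      rw [this, hcomp]
      rfl
    rw [h1, ih _ (dLine_contDiff hf _) x (Fin.init w)]
    rw [List.ofFn_succ' w, List.concat_eq_append, List.foldr_append]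
    rfl

lemma iteratedFDeriv_perm {f : E → ℝ} (hf : ContDiff ℝ (⊤ : ℕ∞) f) {m : ℕ}
    (σ : Equiv.Perm (Fin m)) (x : E) (w : Fin m → E) :
    iteratedFDeriv ℝ m f x (w ∘ σ) = iteratedFDeriv ℝ m f x w := by
  rw [iteratedFDeriv_eq_foldr m f hf x, iteratedFDeriv_eq_foldr m f hf x]
  suffices h : (List.ofFn (w ∘ σ)).Perm (List.ofFn w) by
    rw [foldr_dLine_perm hf h]
  have h1 : List.ofFn (w ∘ σ) = (List.ofFn (⇑σ)).map w := by
    rw [List.map_ofFn]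
  have h2 : List.ofFn w = (List.finRange m).map w := List.ofFn_eq_map
  rw [h1, h2]
  apply List.Perm.map
  apply List.perm_of_nodup_nodup_toFinset_eq
  · exact List.nodup_ofFn.mpr σ.injective
  · exact List.nodup_finRange m
  · ext a
    simp [List.mem_ofFn, σ.surjective a]

end Symmetry

section Polar
variable {E : Type*} [NormedAddCommGroup E] [NormedSpace ℝ E]

lemma polarization {f : E → ℝ} (hf : ContDiff ℝ (⊤ : ℕ∞) f) {m : ℕ} (x : E)
    (z : Fin m → E) :
    (m.factorial : ℝ) * iteratedFDeriv ℝ m f x z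
      = ∑ S ∈ (Finset.univ : Finset (Fin m)).powerset,
          (-1 : ℝ) ^ (m - S.card) * iteratedFDeriv ℝ m f x (fun _ => ∑ j ∈ S, z j) := by
  classical
  set B := iteratedFDeriv ℝ m f x with hB
  have step1 : ∀ S : Finset (Fin m), B (fun _ => ∑ j ∈ S, z j)
      = ∑ r ∈ Fintype.piFinset (fun _ : Fin m => S), B (fun i => z (r i)) := by
    intro S
    exact B.toMultilinearMap.map_sum_finset (fun _ j => z j) (fun _ => S)
  calc (m.factorial : ℝ) * B z
      = ∑ r ∈ Finset.univ.filter (fun r : Fin m → Fin m => Function.Surjective r),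
          B (fun i => z (r i)) := by
        have hval : ∀ r ∈ Finset.univ.filter
            (fun r : Fin m → Fin m => Function.Surjective r),
            B (fun i => z (r i)) = B z := by
          intro r hr
          have hsurj : Function.Surjective r := by
            simpa using (Finset.mem_filter.mp hr).2
          have hbij : Function.Bijective r :=
            (Fintype.bijective_iff_surjective_and_card r).2 ⟨hsurj, rfl⟩
          have := iteratedFDeriv_perm hf (Equiv.ofBijective r hbij) x z
          simpa [hB, Function.comp_def] using this
        rw [Finset.sum_congr rfl hval, Finset.sum_const]
        have hcard : (Finset.univ.filter
            (fun r : Fin m → Fin m => Function.Surjective r)).card = m.factorial := by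
          have e : Equiv.Perm (Fin m) ≃
              {r : Fin m → Fin m // Function.Surjective r} :=
            { toFun := fun σ => ⟨σ, σ.surjective⟩
              invFun := fun r => Equiv.ofBijective r
                ((Fintype.bijective_iff_surjective_and_card r.1).2 ⟨r.2, rfl⟩)
              left_inv := fun σ => Equiv.ext fun y => rfl
              right_inv := fun r => Subtype.ext rfl }
          rw [← Fintype.card_subtype, ← Fintype.card_congr e, Fintype.card_perm,
            Fintype.card_fin]
        rw [hcard, nsmul_eq_mul]
    _ = ∑ r : Fin m → Fin m,
          (if Function.Surjective r then (1 : ℝ) else 0) * B (fun i => z (r i)) := by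
        rw [Finset.sum_filter]
        exact Finset.sum_congr rfl fun r _ => by split <;> simp
    _ = ∑ r : Fin m → Fin m,
          (∑ S ∈ (Finset.univ : Finset (Fin m)).powerset.filter
              (fun S => ∀ i, r i ∈ S), (-1 : ℝ) ^ (m - S.card))
            * B (fun i => z (r i)) := by
        refine Finset.sum_congr rfl fun r _ => ?_
        congr 1
        have key : ∀ r : Fin m → Fin m,
            (∑ S ∈ (Finset.univ : Finset (Fin m)).powerset.filter
              (fun S => ∀ i, r i ∈ S), (-1 : ℝ) ^ (m - S.card))
            = if Function.Surjective r then (1 : ℝ) else 0 := by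
          intro r
          set T : Finset (Fin m) := Finset.image r Finset.univ with hT
          have h1 : ((Finset.univ : Finset (Fin m)).powerset.filter
              (fun S => ∀ i, r i ∈ S)) = Tᶜ.powerset.image (fun V => Vᶜ) := by
            ext S
            simp only [Finset.mem_filter, Finset.mem_powerset, Finset.mem_image]
            constructor
            · intro ⟨_, h2⟩
              refine ⟨Sᶜ, ?_, by simp⟩
              intro a ha
              simp only [Finset.mem_compl] at ha ⊢
              intro haT
              rcases Finset.mem_image.mp haT with ⟨i, -, rfl⟩
              exact ha (h2 i)
            · rintro ⟨V, hV, rfl⟩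
              refine ⟨Finset.subset_univ _, fun i => ?_⟩
              simp only [Finset.mem_compl]
              intro hri
              have : r i ∈ T := Finset.mem_image_of_mem r (Finset.mem_univ i)
              exact (Finset.mem_compl.mp (hV hri)) this
          rw [h1, Finset.sum_image (by
            intro a _ b _ hab
            simpa using congrArg (fun s => sᶜ) hab)]
          have h2 : ∀ V ∈ Tᶜ.powerset, (-1 : ℝ) ^ (m - (Vᶜ : Finset (Fin m)).card)
              = (-1 : ℝ) ^ V.card := by
            intro V hV
            congr 1
            rw [Finset.card_compl, Fintype.card_fin]
            have : V.card ≤ m := by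
              simpa using Finset.card_le_card (Finset.subset_univ V)
            omega
          rw [Finset.sum_congr rfl h2]
          have h3 := Finset.sum_powerset_neg_one_pow_card (x := Tᶜ)
          have h4 : ((∑ V ∈ Tᶜ.powerset, (-1 : ℤ) ^ V.card : ℤ) : ℝ)
              = ∑ V ∈ Tᶜ.powerset, (-1 : ℝ) ^ V.card := by push_cast; ring_nf
          rw [← h4, h3]
          have h5 : (Tᶜ = ∅) ↔ Function.Surjective r := by
            rw [Finset.compl_eq_empty_iff]
            constructor
            · intro h a
              have : a ∈ T := h ▸ Finset.mem_univ a
              rcases Finset.mem_image.mp this with ⟨i, -, rfl⟩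
              exact ⟨i, rfl⟩
            · intro h
              ext a
              simp only [Finset.mem_univ, iff_true, hT]
              rcases h a with ⟨i, rfl⟩
              exact Finset.mem_image_of_mem r (Finset.mem_univ i)
          split_ifs with h6 h7 h7 <;> simp_all
        rw [key]
    _ = ∑ S ∈ (Finset.univ : Finset (Fin m)).powerset,
          (-1 : ℝ) ^ (m - S.card) * B (fun _ => ∑ j ∈ S, z j) := by
        rw [eq_comm]
        have hswap : ∀ S : Finset (Fin m),
            (∑ r ∈ Fintype.piFinset (fun _ : Fin m => S),
              (-1 : ℝ) ^ (m - S.card) * B (fun i => z (r i)))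
            = ∑ r : Fin m → Fin m, if ∀ i, r i ∈ S then
                (-1 : ℝ) ^ (m - S.card) * B (fun i => z (r i)) else 0 := by
          intro S
          rw [← Finset.sum_filter]
          apply Finset.sum_congr _ (fun _ _ => rfl)
          ext r
          simp [Fintype.mem_piFinset]
        calc ∑ S ∈ (Finset.univ : Finset (Fin m)).powerset,
              (-1 : ℝ) ^ (m - S.card) * B (fun _ => ∑ j ∈ S, z j)
            = ∑ S ∈ (Finset.univ : Finset (Fin m)).powerset,
                ∑ r : Fin m → Fin m, if ∀ i, r i ∈ S then
                  (-1 : ℝ) ^ (m - S.card) * B (fun i => z (r i)) else 0 := by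
              simp_rw [step1, Finset.mul_sum]
              exact Finset.sum_congr rfl fun S _ => hswap S
          _ = ∑ r : Fin m → Fin m, ∑ S ∈ (Finset.univ : Finset (Fin m)).powerset,
                if ∀ i, r i ∈ S then
                  (-1 : ℝ) ^ (m - S.card) * B (fun i => z (r i)) else 0 :=
              Finset.sum_comm
          _ = ∑ r : Fin m → Fin m,
                (∑ S ∈ (Finset.univ : Finset (Fin m)).powerset.filter
                  (fun S => ∀ i, r i ∈ S), (-1 : ℝ) ^ (m - S.card))
                * B (fun i => z (r i)) := by
              refine Finset.sum_congr rfl fun r _ => ?_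
              rw [Finset.sum_mul, Finset.sum_filter]
end Polar

section Lp
variable {d : ℕ} {p : ℝ}

noncomputable abbrev μd (d : ℕ) : Measure (Fin d → ℝ) := (volume : Measure (Fin d → ℝ)).restrict (Set.Icc 0 1)

lemma memLp_of_continuous (hp : 1 ≤ p) {f : (Fin d → ℝ) → ℝ} (hf : Continuous f) :
    MemLp f (ENNReal.ofReal p) (μd d) := by
  refine ⟨hf.aestronglyMeasurable, ?_⟩
  obtain ⟨C, hC⟩ := (isCompact_Icc (a := (0 : Fin d → ℝ)) (b := 1)).exists_bound_of_continuousOn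
    hf.continuousOn
  have hae : ∀ᵐ x ∂(μd d), ‖f x‖ ≤ C :=
    (ae_restrict_mem measurableSet_Icc).mono fun x hx => hC x hx
  refine lt_of_le_of_lt (eLpNorm_le_of_ae_bound hae) ?_
  apply ENNReal.mul_lt_top
  · refine ENNReal.rpow_lt_top_of_nonneg (by positivity) ?_
    rw [Measure.restrict_apply_univ]
    exact (isCompact_Icc.measure_lt_top).ne
  · exact ENNReal.ofReal_lt_top

lemma integral_rpow_eq_eLpNorm (hp : 1 ≤ p) {f : (Fin d → ℝ) → ℝ} (hf : Continuous f) :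
    (∫ x in Set.Icc (0 : Fin d → ℝ) 1, |f x| ^ p) ^ (1 / p)
      = (eLpNorm f (ENNReal.ofReal p) (μd d)).toReal := by
  have hp0 : 0 < p := lt_of_lt_of_le one_pos hp
  have h1 : (ENNReal.ofReal p) ≠ 0 := by
    simp [ENNReal.ofReal_eq_zero, not_le, hp0]
  have h2 : (ENNReal.ofReal p) ≠ ⊤ := ENNReal.ofReal_ne_top
  rw [(memLp_of_continuous hp hf).eLpNorm_eq_integral_rpow_norm h1 h2]
  rw [ENNReal.toReal_ofReal (by positivity)]
  rw [ENNReal.toReal_ofReal hp0.le]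
  simp_rw [Real.norm_eq_abs, one_div]

lemma lp_sum_bound (hp : 1 ≤ p) {ι : Type*} (s : Finset ι) (f : (Fin d → ℝ) → ℝ)
    (g : ι → (Fin d → ℝ) → ℝ) (hf : Continuous f) (hg : ∀ i ∈ s, Continuous (g i))
    (c : ι → ℝ) (hc : ∀ i ∈ s, 0 ≤ c i)
    (h : ∀ x, |f x| ≤ ∑ i ∈ s, c i * |g i x|) :
    (∫ x in Set.Icc (0 : Fin d → ℝ) 1, |f x| ^ p) ^ (1 / p)
      ≤ ∑ i ∈ s, c i * (∫ x in Set.Icc (0 : Fin d → ℝ) 1, |g i x| ^ p) ^ (1 / p) := by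
  classical
  have hp1 : (1 : ENNReal) ≤ ENNReal.ofReal p := by
    rw [ENNReal.one_le_ofReal]; exact hp
  have key : eLpNorm f (ENNReal.ofReal p) (μd d)
      ≤ ∑ i ∈ s, ENNReal.ofReal (c i) * eLpNorm (g i) (ENNReal.ofReal p) (μd d) := by
    have step1 : eLpNorm f (ENNReal.ofReal p) (μd d)
        ≤ eLpNorm (∑ i ∈ s, fun x => c i * |g i x|) (ENNReal.ofReal p) (μd d) := by
      apply eLpNorm_mono_real
      intro x
      rw [Real.norm_eq_abs]
      refine (h x).trans (le_of_eq ?_)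
      rw [Finset.sum_apply]
    refine step1.trans ?_
    refine (eLpNorm_sum_le (fun i hi => ?_) hp1).trans ?_
    · exact (continuous_const.mul (hg i hi).abs).aestronglyMeasurable
    · refine Finset.sum_le_sum fun i hi => ?_
      have e1 : (fun x => c i * |g i x|) = (c i) • (fun x => |g i x|) := by
        funext x; simp [smul_eq_mul]
      have e2 : eLpNorm (fun x => |g i x|) (ENNReal.ofReal p) (μd d)
          = eLpNorm (g i) (ENNReal.ofReal p) (μd d) := by
        simpa [Real.norm_eq_abs] using
          eLpNorm_norm (F := ℝ) (μ := μd d) (p := ENNReal.ofReal p) (g i)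
      rw [e1, eLpNorm_const_smul, e2]
      apply le_of_eq
      congr 1
      rw [Real.enorm_eq_ofReal (hc i hi)]
  rw [integral_rpow_eq_eLpNorm hp hf]
  have hrhs : ∀ i ∈ s, c i * (∫ x in Set.Icc (0 : Fin d → ℝ) 1, |g i x| ^ p) ^ (1 / p)
      = (ENNReal.ofReal (c i) * eLpNorm (g i) (ENNReal.ofReal p) (μd d)).toReal := by
    intro i hi
    rw [integral_rpow_eq_eLpNorm hp (hg i hi), ENNReal.toReal_mul,
      ENNReal.toReal_ofReal (hc i hi)]
  rw [Finset.sum_congr rfl hrhs, ← ENNReal.toReal_sum]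
  · exact ENNReal.toReal_mono (by
      refine (ENNReal.sum_lt_top.mpr fun i hi => ?_).ne
      exact ENNReal.mul_lt_top ENNReal.ofReal_lt_top (memLp_of_continuous hp (hg i hi)).2) key
  · intro i hi
    exact (ENNReal.mul_lt_top ENNReal.ofReal_lt_top (memLp_of_continuous hp (hg i hi)).2).ne
end Lp

/-- Equivalence of the homogeneous `W^{m,p}` norm with the sum of `L^p` norms of `m`-th
directional derivatives along a suitable finite set of nonzero integer vectors: for all
`d, m ≥ 1` and `p ∈ [1,∞)` there are a finite set `P ⊂ ℤ^d \ {0}` and `c, C > 0` such that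
for every smooth `ℤ^d`-periodic `v : ℝ^d → ℝ`,
`c·Σ_{|α|=m} ‖∂^α v‖_{L^p} ≤ Σ_{k ∈ P} ‖(k·∇)^m v‖_{L^p} ≤ C·Σ_{|α|=m} ‖∂^α v‖_{L^p}`. -/
theorem stmt_13 (d m : ℕ) (hd : 1 ≤ d) (hm : 1 ≤ m) (p : ℝ) (hp : 1 ≤ p) :
    ∃ (P : Finset (Fin d → ℤ)) (c C : ℝ),
      (∀ k ∈ P, k ≠ 0) ∧ 0 < c ∧ 0 < C ∧
      ∀ v : (Fin d → ℝ) → ℝ, ContDiff ℝ (⊤ : ℕ∞) v →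
        (∀ (x : Fin d → ℝ) (n : Fin d → ℤ), v (x + fun i => (n i : ℝ)) = v x) →
        (c * ∑ idx : Fin m → Fin d,
            (∫ x in Set.Icc (0 : Fin d → ℝ) 1,
              |iteratedFDeriv ℝ m v x (fun l => Pi.single (idx l) 1)| ^ p) ^ (1 / p)
          ≤ ∑ k ∈ P,
            (∫ x in Set.Icc (0 : Fin d → ℝ) 1,
              |iteratedFDeriv ℝ m v x (fun _ => fun i => ((k i : ℝ)))| ^ p) ^ (1 / p)) ∧
        (∑ k ∈ P,
            (∫ x in Set.Icc (0 : Fin d → ℝ) 1,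
              |iteratedFDeriv ℝ m v x (fun _ => fun i => ((k i : ℝ)))| ^ p) ^ (1 / p)
          ≤ C * ∑ idx : Fin m → Fin d,
            (∫ x in Set.Icc (0 : Fin d → ℝ) 1,
              |iteratedFDeriv ℝ m v x (fun l => Pi.single (idx l) 1)| ^ p) ^ (1 / p)) := by
  classical
  have hp0 : 0 < p := lt_of_lt_of_le one_pos hp
  set P : Finset (Fin d → ℤ) :=
    (Finset.Icc (0 : Fin d → ℤ) (fun _ => (m : ℤ))).filter (· ≠ 0) with hP
  have hPmem : ∀ k ∈ P, (∀ i, 0 ≤ k i ∧ k i ≤ m) ∧ k ≠ 0 := by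
    intro k hk
    rw [hP, Finset.mem_filter, Finset.mem_Icc] at hk
    exact ⟨fun i => ⟨hk.1.1 i, hk.1.2 i⟩, hk.2⟩
  refine ⟨P, (m.factorial : ℝ) / ((d : ℝ) ^ m * 2 ^ m), (P.card : ℝ) * (m : ℝ) ^ m + 1,
    fun k hk => (hPmem k hk).2, by positivity, by positivity, ?_⟩
  intro v hv _hper
  -- notation
  set nrm : ((Fin d → ℝ) → ℝ) → ℝ :=
    fun f => (∫ x in Set.Icc (0 : Fin d → ℝ) 1, |f x| ^ p) ^ (1 / p) with hnrm
  set F : (Fin m → Fin d) → (Fin d → ℝ) → ℝ :=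
    fun idx x => iteratedFDeriv ℝ m v x (fun l => Pi.single (idx l) 1) with hF
  set G : (Fin d → ℤ) → (Fin d → ℝ) → ℝ :=
    fun k x => iteratedFDeriv ℝ m v x (fun _ => fun i => ((k i : ℝ))) with hG
  have hnonneg : ∀ f, 0 ≤ nrm f := fun f =>
    Real.rpow_nonneg (integral_nonneg fun x => Real.rpow_nonneg (abs_nonneg _) p) _
  have hcont : Continuous (fun x => iteratedFDeriv ℝ m v x) :=
    ((hv.iteratedFDeriv_right (m := 0) (by exact_mod_cast le_top)).continuous : Continuous (iteratedFDeriv ℝ m v))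
  have hFcont : ∀ idx, Continuous (F idx) := fun idx =>
    (continuous_eval_const _).comp hcont
  have hGcont : ∀ k, Continuous (G k) := fun k =>
    (continuous_eval_const _).comp hcont
  -- the zero vector gives the zero function
  have hGzero : ∀ x, G 0 x = 0 := by
    intro x
    have h0 : (fun i => (((0 : Fin d → ℤ) i : ℤ) : ℝ)) = (0 : Fin d → ℝ) := by
      funext i; simp
    exact (iteratedFDeriv ℝ m v x).map_coord_zero ⟨0, hm⟩ h0
  have hnrmG0 : nrm (G 0) = 0 := by
    have hz : ∀ x : Fin d → ℝ, |G 0 x| ^ p = 0 := fun x => by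
      rw [hGzero x, abs_zero, Real.zero_rpow hp0.ne']
    rw [hnrm]
    simp only [hz, integral_zero]
    exact Real.zero_rpow (by positivity)
  constructor
  · -- lower bound
    have hidx : ∀ idx : Fin m → Fin d,
        nrm (F idx) ≤ (2 : ℝ) ^ m * ((m.factorial : ℝ)⁻¹ * ∑ k ∈ P, nrm (G k)) := by
      intro idx
      set kS : Finset (Fin m) → (Fin d → ℤ) :=
        fun S => ∑ j ∈ S, Pi.single (idx j) (1 : ℤ) with hkS
      have hkS_apply : ∀ (S : Finset (Fin m)) (i : Fin d),
          kS S i = ∑ j ∈ S, if i = idx j then (1 : ℤ) else 0 := by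
        intro S i
        rw [hkS]
        simp only [Finset.sum_apply, Pi.single_apply]
      have hcast : ∀ (S : Finset (Fin m)),
          (fun _ : Fin m => fun i => ((kS S) i : ℝ))
            = (fun _ : Fin m => ∑ j ∈ S, Pi.single (idx j) (1 : ℝ)) := by
        intro S
        funext l i
        rw [hkS_apply]
        simp only [Finset.sum_apply, Pi.single_apply]
        push_cast
        rfl
      have hfac : (0 : ℝ) < (m.factorial : ℝ) := by
        exact_mod_cast m.factorial_pos
      have hpt : ∀ x, |F idx x| ≤ ∑ S ∈ (Finset.univ : Finset (Fin m)).powerset,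
          (m.factorial : ℝ)⁻¹ * |G (kS S) x| := by
        intro x
        have hpol := polarization hv x (fun l : Fin m => Pi.single (idx l) (1 : ℝ))
        have hrep : F idx x = (m.factorial : ℝ)⁻¹ *
            ∑ S ∈ (Finset.univ : Finset (Fin m)).powerset,
              (-1 : ℝ) ^ (m - S.card) * G (kS S) x := by
          rw [eq_inv_mul_iff_mul_eq₀ hfac.ne']
          rw [hF]
          simp only
          rw [hpol]
          refine Finset.sum_congr rfl fun S _ => ?_
          congr 1
          rw [hG]
          simp only
          rw [hcast S]
        calc |F idx x| = (m.factorial : ℝ)⁻¹ *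
              |∑ S ∈ (Finset.univ : Finset (Fin m)).powerset,
                (-1 : ℝ) ^ (m - S.card) * G (kS S) x| := by
              rw [hrep, abs_mul, abs_inv, Nat.abs_cast]
          _ ≤ (m.factorial : ℝ)⁻¹ *
              ∑ S ∈ (Finset.univ : Finset (Fin m)).powerset,
                |(-1 : ℝ) ^ (m - S.card) * G (kS S) x| := by
              exact mul_le_mul_of_nonneg_left (Finset.abs_sum_le_sum_abs _ _)
                (by positivity)
          _ = ∑ S ∈ (Finset.univ : Finset (Fin m)).powerset,
                (m.factorial : ℝ)⁻¹ * |G (kS S) x| := by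
              rw [Finset.mul_sum]
              refine Finset.sum_congr rfl fun S _ => ?_
              rw [abs_mul, abs_pow, abs_neg, abs_one, one_pow, one_mul]
      have h1 := lp_sum_bound hp (Finset.univ.powerset) (F idx) (fun S => G (kS S))
        (hFcont idx) (fun S _ => hGcont _) (fun _ => (m.factorial : ℝ)⁻¹)
        (fun _ _ => by positivity) hpt
      refine h1.trans ?_
      have hterm : ∀ S ∈ (Finset.univ : Finset (Fin m)).powerset,
          (m.factorial : ℝ)⁻¹ * nrm (G (kS S))
            ≤ (m.factorial : ℝ)⁻¹ * ∑ k ∈ P, nrm (G k) := by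
        intro S _
        refine mul_le_mul_of_nonneg_left ?_ (by positivity)
        rcases S.eq_empty_or_nonempty with rfl | hS
        · have h0 : kS ∅ = 0 := by rw [hkS]; simp
          rw [h0, hnrmG0]
          exact Finset.sum_nonneg fun k _ => hnonneg _
        · have hmem : kS S ∈ P := by
            rw [hP, Finset.mem_filter, Finset.mem_Icc]
            refine ⟨⟨?_, ?_⟩, ?_⟩
            · intro i
              rw [hkS_apply]
              exact Finset.sum_nonneg fun j _ => by split <;> simp
            · intro i
              rw [hkS_apply]
              calc (∑ j ∈ S, if i = idx j then (1 : ℤ) else 0)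
                  ≤ ∑ j ∈ S, 1 := Finset.sum_le_sum fun j _ => by split <;> simp
                _ = (S.card : ℤ) := by rw [Finset.sum_const]; simp
                _ ≤ (m : ℤ) := by
                    have := Finset.card_le_univ S
                    rw [Fintype.card_fin] at this
                    exact_mod_cast this
            · intro h0
              obtain ⟨j0, hj0⟩ := hS
              have he := congrFun h0 (idx j0)
              rw [hkS_apply] at he
              simp only [Pi.zero_apply] at he
              have hge : (1 : ℤ) ≤ ∑ j ∈ S, if idx j0 = idx j then (1 : ℤ) else 0 := by
                have := Finset.single_le_sum
                  (f := fun j => if idx j0 = idx j then (1 : ℤ) else 0)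
                  (fun j _ => by by_cases h : idx j0 = idx j <;> simp [h]) hj0
                simpa using this
              rw [he] at hge
              omega
          exact Finset.single_le_sum (fun k _ => hnonneg (G k)) hmem
      refine (Finset.sum_le_sum hterm).trans ?_
      rw [Finset.sum_const, Finset.card_powerset, Finset.card_univ, Fintype.card_fin,
        nsmul_eq_mul]
      push_cast
      exact le_rfl
    have hsum : ∑ idx : Fin m → Fin d, nrm (F idx)
        ≤ (d : ℝ) ^ m * ((2 : ℝ) ^ m * ((m.factorial : ℝ)⁻¹ * ∑ k ∈ P, nrm (G k))) := by
      refine (Finset.sum_le_sum fun idx _ => hidx idx).trans ?_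
      rw [Finset.sum_const, Finset.card_univ, nsmul_eq_mul]
      apply le_of_eq
      congr 1
      rw [Fintype.card_fun, Fintype.card_fin, Fintype.card_fin]
      push_cast
      ring
    have key : (m.factorial : ℝ) / ((d : ℝ) ^ m * 2 ^ m) *
        ∑ idx : Fin m → Fin d, nrm (F idx) ≤ ∑ k ∈ P, nrm (G k) := by
      have hd0 : (0 : ℝ) < (d : ℝ) ^ m := by positivity
      have hfac : (0 : ℝ) < (m.factorial : ℝ) := by exact_mod_cast m.factorial_pos
      calc (m.factorial : ℝ) / ((d : ℝ) ^ m * 2 ^ m) * ∑ idx : Fin m → Fin d, nrm (F idx)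
          ≤ (m.factorial : ℝ) / ((d : ℝ) ^ m * 2 ^ m) *
            ((d : ℝ) ^ m * ((2 : ℝ) ^ m * ((m.factorial : ℝ)⁻¹ * ∑ k ∈ P, nrm (G k)))) :=
            mul_le_mul_of_nonneg_left hsum (by positivity)
        _ = ∑ k ∈ P, nrm (G k) := by
            field_simp
    exact key
  · -- upper bound
    have hkb : ∀ k ∈ P, nrm (G k) ≤ (m : ℝ) ^ m * ∑ idx : Fin m → Fin d, nrm (F idx) := by
      intro k hk
      obtain ⟨hbound, -⟩ := hPmem k hk
      have hptG : ∀ x, |G k x| ≤ ∑ r : Fin m → Fin d,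
          (∏ l : Fin m, |((k (r l) : ℝ))|) * |F r x| := by
        intro x
        have hvec : (fun i => ((k i : ℝ)))
            = ∑ j : Fin d, ((k j : ℝ)) • (Pi.single j (1 : ℝ) : Fin d → ℝ) := by
          funext i
          simp only [Finset.sum_apply, Pi.smul_apply, Pi.single_apply, smul_eq_mul,
            mul_ite, mul_one, mul_zero]
          rw [Finset.sum_ite_eq Finset.univ i (fun j => ((k j : ℝ)))]
          simp
        have hexp : G k x = ∑ r : Fin m → Fin d,
            (∏ l : Fin m, ((k (r l) : ℝ))) * F r x := by
          rw [hG]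
          simp only
          rw [show (fun _ : Fin m => fun i => ((k i : ℝ)))
              = fun _ : Fin m => ∑ j : Fin d, ((k j : ℝ)) • (Pi.single j (1 : ℝ) : Fin d → ℝ) from
            funext fun _ => hvec]
          rw [(iteratedFDeriv ℝ m v x).map_sum]
          refine Finset.sum_congr rfl fun r _ => ?_
          rw [(iteratedFDeriv ℝ m v x).map_smul_univ]
          rw [hF]
          simp [smul_eq_mul]
        rw [hexp]
        refine (Finset.abs_sum_le_sum_abs _ _).trans ?_
        refine Finset.sum_le_sum fun r _ => ?_
        rw [abs_mul, Finset.abs_prod]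
      have h2 := lp_sum_bound hp Finset.univ (G k) F (hGcont k) (fun r _ => hFcont r)
        (fun r => ∏ l : Fin m, |((k (r l) : ℝ))|) (fun r _ => by positivity) hptG
      refine h2.trans ?_
      rw [Finset.mul_sum]
      refine Finset.sum_le_sum fun r _ => ?_
      refine mul_le_mul_of_nonneg_right ?_ (hnonneg _)
      calc (∏ l : Fin m, |((k (r l) : ℝ))|) ≤ ∏ _l : Fin m, (m : ℝ) := by
            refine Finset.prod_le_prod (fun l _ => abs_nonneg _) (fun l _ => ?_)
            have h := hbound (r l)
            rw [abs_of_nonneg (by exact_mod_cast h.1)]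
            exact_mod_cast h.2
        _ = (m : ℝ) ^ m := by rw [Finset.prod_const, Finset.card_univ, Fintype.card_fin]
    have hS0 : 0 ≤ ∑ idx : Fin m → Fin d, nrm (F idx) :=
      Finset.sum_nonneg fun idx _ => hnonneg _
    have key : ∑ k ∈ P, nrm (G k)
        ≤ ((P.card : ℝ) * (m : ℝ) ^ m + 1) * ∑ idx : Fin m → Fin d, nrm (F idx) := by
      refine (Finset.sum_le_sum hkb).trans ?_
      rw [Finset.sum_const, nsmul_eq_mul]
      nlinarith [hS0]
    exact key
end
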